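/- arXiv:2306.00843 — 5 statements merged into one kernel-verified Lean document; each statement's English description precedes it below -/
import Mathlib

section
/- Let T be a tree with h₁ leaves and h₂ vertices of degree two, and let F be a family of paths in T that separates and covers the edge set E(T). Then 2|F| ≥ h₁ + h₂. -/
open SimpleGraph
open scoped Classical

universe u

variable {V : Type u}

/-- A path in a graph `G`, recorded with its two endpoints. -/
def PathIn {V : Type u} (G : SimpleGraph V) : Type u :=
  Σ a b : V, {p : G.Walk a b // p.IsPath}

/-- The path `P` contains the vertex `x`. -/
def PathIn.vmem {G : SimpleGraph V} (x : V) (P : PathIn G) : Prop :=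
  x ∈ P.2.2.1.support

/-- The path `P` contains the edge `e`. -/
def PathIn.emem {G : SimpleGraph V} (e : Sym2 V) (P : PathIn G) : Prop :=
  e ∈ P.2.2.1.edges

/-- The path `P` contains the element `s` (a vertex or an edge). -/
def ElemMem (G : SimpleGraph V) (s : V ⊕ Sym2 V) (P : PathIn G) : Prop :=
  Sum.elim (fun x => PathIn.vmem x P) (fun e => PathIn.emem e P) s

/-- `F` separates the set `S` of elements (vertices and/or edges) of `G`. -/
def Separates (G : SimpleGraph V) (S : Set (V ⊕ Sym2 V)) (F : Set (PathIn G)) : Prop :=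
  ∀ s ∈ S, ∀ t ∈ S, s ≠ t → ∃ P ∈ F,
    (ElemMem G s P ∧ ¬ ElemMem G t P) ∨ (¬ ElemMem G s P ∧ ElemMem G t P)

/-- `F` covers the set `S` of elements of `G`. -/
def Covers (G : SimpleGraph V) (S : Set (V ⊕ Sym2 V)) (F : Set (PathIn G)) : Prop :=
  ∀ s ∈ S, ∃ P ∈ F, ElemMem G s P

/-- `F` separates the edges of `G`. -/
def EdgeSep (G : SimpleGraph V) (F : Set (PathIn G)) : Prop :=
  ∀ e ∈ G.edgeSet, ∀ f ∈ G.edgeSet, e ≠ f → ∃ P ∈ F,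
    (PathIn.emem e P ∧ ¬ PathIn.emem f P) ∨ (¬ PathIn.emem e P ∧ PathIn.emem f P)

/-- `F` covers the edges of `G`. -/
def EdgeCover (G : SimpleGraph V) (F : Set (PathIn G)) : Prop :=
  ∀ e ∈ G.edgeSet, ∃ P ∈ F, PathIn.emem e P

/-- `F` separates the vertices of `G`. -/
def VertexSep (G : SimpleGraph V) (F : Set (PathIn G)) : Prop :=
  ∀ x y : V, x ≠ y → ∃ P ∈ F,
    (PathIn.vmem x P ∧ ¬ PathIn.vmem y P) ∨ (¬ PathIn.vmem x P ∧ PathIn.vmem y P)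

/-- `F` covers the vertices of `G`. -/
def VertexCover (G : SimpleGraph V) (F : Set (PathIn G)) : Prop :=
  ∀ x : V, ∃ P ∈ F, PathIn.vmem x P

/-- The number of leaves of `G`. -/
noncomputable def leafCount (G : SimpleGraph V) [Fintype V] : ℕ :=
  Nat.card {x : V | G.degree x = 1}

/-- The number of degree-two vertices of `G`. -/
noncomputable def deg2Count (G : SimpleGraph V) [Fintype V] : ℕ :=
  Nat.card {x : V | G.degree x = 2}

/-- The set of interior edges: edges with neither endpoint a leaf. -/
noncomputable def interiorEdgeSet (G : SimpleGraph V) [Fintype V] : Set (Sym2 V) :=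
  {e : Sym2 V | e ∈ G.edgeSet ∧ ∀ x ∈ e, G.degree x ≠ 1}

/-! An interior vertex of a path meets two edges of the path. Hence a leaf on a path of `F` (every
leaf is, as `F` covers the edges) is an endpoint of it, and so is a degree-two vertex on a path of `F`
containing exactly one of its two edges (such a path exists as `F` separates them). So all leaves and
degree-two vertices are among the at most `2 |F|` endpoints of paths of `F`. -/

namespace SimpleGraph

lemma ncard_neighborSet_eq_degree (G : SimpleGraph V) (x : V) [Fintype (G.neighborSet x)] :
    (G.neighborSet x).ncard = G.degree x := by
  rw [Set.ncard_eq_toFinset_card']; rfl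

namespace Walk.IsPath

variable {G : SimpleGraph V} {u v x : V} {p : G.Walk u v}

lemma ncard_neighborSet_toSubgraph_eq_two (hp : p.IsPath) (hx : x ∈ p.support)
    (hxu : x ≠ u) (hxv : x ≠ v) : (p.toSubgraph.neighborSet x).ncard = 2 := by
  obtain ⟨n, rfl, hn⟩ := mem_support_iff_exists_getVert.mp hx
  have hn0 : n ≠ 0 := by rintro rfl; exact hxu p.getVert_zero
  have hnl : n ≠ p.length := by rintro rfl; exact hxv p.getVert_length
  exact hp.ncard_neighborSet_toSubgraph_internal_eq_two hn0 (by omega)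

lemma two_le_degree_of_ne_of_ne [Fintype (G.neighborSet x)] (hp : p.IsPath)
    (hx : x ∈ p.support) (hxu : x ≠ u) (hxv : x ≠ v) : 2 ≤ G.degree x := by
  rw [← hp.ncard_neighborSet_toSubgraph_eq_two hx hxu hxv, ← ncard_neighborSet_eq_degree]
  exact Set.ncard_le_ncard (p.toSubgraph.neighborSet_subset x)

lemma mk_mem_edges_of_degree_le_two [Fintype (G.neighborSet x)] (hp : p.IsPath)
    (hx : x ∈ p.support) (hxu : x ≠ u) (hxv : x ≠ v) (hdeg : G.degree x ≤ 2) {y : V}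
    (hxy : G.Adj x y) : s(x, y) ∈ p.edges := by
  have heq : p.toSubgraph.neighborSet x = G.neighborSet x :=
    Set.eq_of_subset_of_ncard_le (p.toSubgraph.neighborSet_subset x) (by
      rw [ncard_neighborSet_eq_degree, hp.ncard_neighborSet_toSubgraph_eq_two hx hxu hxv]
      exact hdeg)
  have hy : y ∈ p.toSubgraph.neighborSet x := heq ▸ hxy
  exact p.mem_edges_toSubgraph.mp hy

end Walk.IsPath

end SimpleGraph

namespace PathIn

variable {G : SimpleGraph V} {x : V}

def endpoints (F : Set (PathIn G)) : Set V :=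
  (fun P : PathIn G => P.1) '' F ∪ (fun P : PathIn G => P.2.1) '' F

lemma ncard_endpoints_le {F : Set (PathIn G)} (hF : F.Finite) :
    (endpoints F).ncard ≤ 2 * F.ncard :=
  calc (endpoints F).ncard
      ≤ ((fun P : PathIn G => P.1) '' F).ncard + ((fun P : PathIn G => P.2.1) '' F).ncard :=
        Set.ncard_union_le _ _
    _ ≤ F.ncard + F.ncard := add_le_add (Set.ncard_image_le hF) (Set.ncard_image_le hF)
    _ = 2 * F.ncard := (two_mul _).symm

lemma mem_endpoints {F : Set (PathIn G)} {P : PathIn G} (hP : P ∈ F) (hx : P.1 = x ∨ P.2.1 = x) :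
    x ∈ endpoints F :=
  hx.imp (⟨P, hP, ·⟩) (⟨P, hP, ·⟩)

variable [Fintype (G.neighborSet x)]

lemma eq_endpoint_of_degree_le_two (P : PathIn G) (hdeg : G.degree x ≤ 2) {y z : V}
    (hy : PathIn.emem s(x, y) P) (hxz : G.Adj x z) (hz : ¬ PathIn.emem s(x, z) P) :
    P.1 = x ∨ P.2.1 = x := by
  by_contra! h
  exact hz <| P.2.2.2.mk_mem_edges_of_degree_le_two (P.2.2.1.fst_mem_support_of_mem_edges hy)
    h.1.symm h.2.symm hdeg hxz

lemma eq_endpoint_of_degree_eq_one (P : PathIn G) (hdeg : G.degree x = 1) {y : V}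
    (hy : PathIn.emem s(x, y) P) : P.1 = x ∨ P.2.1 = x := by
  by_contra! h
  have := P.2.2.2.two_le_degree_of_ne_of_ne (P.2.2.1.fst_mem_support_of_mem_edges hy)
    h.1.symm h.2.symm
  omega

lemma mem_endpoints_of_degree_eq_one {F : Set (PathIn G)} (hcov : EdgeCover G F)
    (hdeg : G.degree x = 1) : x ∈ endpoints F := by
  obtain ⟨y, hy⟩ := Finset.card_eq_one.mp ((card_neighborFinset_eq_degree G x).trans hdeg)
  have hxy : G.Adj x y := by simp [← mem_neighborFinset, hy]
  obtain ⟨P, hPF, hP⟩ := hcov s(x, y) hxy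
  exact mem_endpoints hPF (P.eq_endpoint_of_degree_eq_one hdeg hP)

lemma mem_endpoints_of_degree_eq_two {F : Set (PathIn G)} (hsep : EdgeSep G F)
    (hdeg : G.degree x = 2) : x ∈ endpoints F := by
  obtain ⟨y, z, hyz, hN⟩ := Finset.card_eq_two.mp ((card_neighborFinset_eq_degree G x).trans hdeg)
  have hxy : G.Adj x y := by simp [← mem_neighborFinset, hN]
  have hxz : G.Adj x z := by simp [← mem_neighborFinset, hN]
  obtain ⟨P, hPF, hP⟩ := hsep s(x, y) hxy s(x, z) hxz (fun h => hyz (Sym2.congr_right.mp h))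
  refine mem_endpoints hPF ?_
  rcases hP with ⟨hy, hz⟩ | ⟨hy, hz⟩
  exacts [P.eq_endpoint_of_degree_le_two hdeg.le hy hxz hz,
    P.eq_endpoint_of_degree_le_two hdeg.le hz hxy hy]

end PathIn

theorem stmt1_general [Fintype V] (G : SimpleGraph V)
    (F : Set (PathIn G)) (hF : F.Finite)
    (hsep : EdgeSep G F) (hcov : EdgeCover G F) :
    leafCount G + deg2Count G ≤ 2 * F.ncard := by
  have hdisj : Disjoint {x | G.degree x = 1} {x | G.degree x = 2} :=
    Set.disjoint_left.mpr fun x h1 h2 => by simp_all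
  have hsub : {x | G.degree x = 1} ∪ {x | G.degree x = 2} ⊆ PathIn.endpoints F := by
    rintro x (hx | hx)
    exacts [PathIn.mem_endpoints_of_degree_eq_one hcov hx,
      PathIn.mem_endpoints_of_degree_eq_two hsep hx]
  calc leafCount G + deg2Count G
      = ({x | G.degree x = 1} ∪ {x | G.degree x = 2}).ncard := by
        rw [leafCount, deg2Count, Nat.card_coe_set_eq, Nat.card_coe_set_eq,
          Set.ncard_union_eq hdisj]
    _ ≤ (PathIn.endpoints F).ncard := Set.ncard_le_ncard hsub (Set.toFinite _)
    _ ≤ 2 * F.ncard := PathIn.ncard_endpoints_le hF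

theorem stmt1 [Fintype V] (G : SimpleGraph V) (hT : G.IsTree)
    (F : Set (PathIn G)) (hF : F.Finite)
    (hsep : EdgeSep G F) (hcov : EdgeCover G F) :
    leafCount G + deg2Count G ≤ 2 * F.ncard :=
  stmt1_general G F hF hsep hcov
end

section
/- Let T be a tree and F a family of paths in T that separates V(T). If xy is an edge of T with both x and y of degree 2 in T, then x or y is an endpoint of some path in F. -/
open SimpleGraph
open scoped Classical

universe u

variable {V : Type u}

namespace SimpleGraph.Walk

variable {G : SimpleGraph V} {a b x y : V} {p : G.Walk a b}

lemma IsPath.exists_adj_adj_of_mem_support (hp : p.IsPath) (hx : x ∈ p.support)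
    (ha : x ≠ a) (hb : x ≠ b) :
    ∃ u v, u ≠ v ∧ G.Adj x u ∧ G.Adj x v ∧ u ∈ p.support ∧ v ∈ p.support := by
  obtain ⟨i, rfl, hi⟩ := mem_support_iff_exists_getVert.mp hx
  have hi0 : i ≠ 0 := fun h => ha (by rw [h, getVert_zero])
  have hil : i ≠ p.length := fun h => hb (by rw [h, getVert_length])
  refine ⟨p.getVert (i - 1), p.getVert (i + 1), fun h => ?_, ?_, p.adj_getVert_succ (by omega),
    p.getVert_mem_support _, p.getVert_mem_support _⟩
  · have := hp.getVert_injOn (by simp only [Set.mem_ofPred_eq]; omega)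
      (by simp only [Set.mem_ofPred_eq]; omega) h
    omega
  · simpa [Nat.sub_add_cancel (Nat.pos_of_ne_zero hi0)] using
      (p.adj_getVert_succ (i := i - 1) (by omega)).symm

lemma IsPath.three_le_degree_of_adj_notMem_support [Fintype (G.neighborSet x)]
    (hp : p.IsPath) (hx : x ∈ p.support) (hy : y ∉ p.support) (hxy : G.Adj x y)
    (ha : x ≠ a) (hb : x ≠ b) : 3 ≤ G.degree x := by
  obtain ⟨u, v, huv, hxu, hxv, hu, hv⟩ := hp.exists_adj_adj_of_mem_support hx ha hb
  rw [← card_neighborFinset_eq_degree]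
  refine Finset.two_lt_card_iff.mpr ⟨y, u, v, ?_, ?_, ?_, ?_, ?_, huv⟩
  · simpa using hxy
  · simpa using hxu
  · simpa using hxv
  · rintro rfl; exact hy hu
  · rintro rfl; exact hy hv

lemma IsPath.eq_or_eq_of_adj_notMem_support [Fintype (G.neighborSet x)]
    (hp : p.IsPath) (hx : x ∈ p.support) (hy : y ∉ p.support) (hxy : G.Adj x y)
    (hdeg : G.degree x ≤ 2) : x = a ∨ x = b := by
  by_contra! h
  have := hp.three_le_degree_of_adj_notMem_support hx hy hxy h.1 h.2
  omega

end SimpleGraph.Walk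

theorem stmt3_general [Fintype V] (G : SimpleGraph V)
    (F : Set (PathIn G)) (hsep : VertexSep G F)
    (x y : V) (hxy : G.Adj x y) (hx : G.degree x = 2) (hy : G.degree y = 2) :
    ∃ P ∈ F, P.1 = x ∨ P.1 = y ∨ P.2.1 = x ∨ P.2.1 = y := by
  obtain ⟨⟨a, b, p, hp⟩, hPF, hsplit⟩ := hsep x y hxy.ne
  refine ⟨_, hPF, ?_⟩
  rcases hsplit with ⟨hxp, hyp⟩ | ⟨hxp, hyp⟩
  · rcases hp.eq_or_eq_of_adj_notMem_support hxp hyp hxy hx.le with rfl | rfl <;> simp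
  · rcases hp.eq_or_eq_of_adj_notMem_support hyp hxp hxy.symm hy.le with rfl | rfl <;> simp

theorem stmt3 [Fintype V] (G : SimpleGraph V) (hT : G.IsTree)
    (F : Set (PathIn G)) (hsep : VertexSep G F)
    (x y : V) (hxy : G.Adj x y) (hx : G.degree x = 2) (hy : G.degree y = 2) :
    ∃ P ∈ F, P.1 = x ∨ P.1 = y ∨ P.2.1 = x ∨ P.2.1 = y :=
  stmt3_general G F hsep x y hxy hx hy
end

section
/- Let T be a tree with no vertices of degree 2. Then there is a family of paths of size at most ⌈2h₁(T)/3⌉ that separates and covers E(T), where h₁(T) is the number of leaves of T. -/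
/-!
Root the tree at a leaf `v₀`, and for an edge `e` let `farSide v₀ e` be the set of vertices cut
off from `v₀` by deleting `e`. These sets form a laminar family, so the leaves can be listed as
`ℓ 0 = v₀, ℓ 1, …, ℓ (n - 1)` with the leaves in each `farSide v₀ e` occupying a block `[a, b)`
of positions, `0 < a`; as no vertex has degree 2, distinct edges have distinct blocks. Take
`m = ⌊n / 3⌋` (`m = 1` if `n = 2`) and the `n - m = ⌈2n / 3⌉` paths from `ℓ i` to `ℓ (i + m)`.
Such a path uses `e` iff exactly one of `i`, `i + m` lies in the block of `e`. Every block is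
straddled by some pair `(i, i + m)`. If two blocks were straddled by the same pairs, the
positions where they agree would form an `m`-periodic pattern on `[0, n)` containing `0` but
missing some `r < m`, so it would alternate along `r < m < r + m < 2m < r + 2m`, which two
intervals cannot do.
-/

open SimpleGraph
open scoped Classical

universe u

variable {V : Type u}

theorem iff_add_mul_of_iff_add {p : ℕ → Prop} {n m : ℕ} (h : ∀ i, i + m < n → (p i ↔ p (i + m)))
    (r k : ℕ) (hk : r + m * k < n) : p (r + m * k) ↔ p r := by
  induction k with
  | zero => simp
  | succ k ih =>
    rw [Nat.mul_succ, ← Nat.add_assoc] at hk ⊢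
    exact (h _ hk).symm.trans (ih (by omega))

theorem exists_lt_sub_straddle {n m a b : ℕ} (hm : 0 < m) (h2m : 2 * m ≤ n) (ha : 0 < a)
    (hab : a < b) (hb : b ≤ n) :
    ∃ i < n - m, ¬((a ≤ i ∧ i < b) ↔ (a ≤ i + m ∧ i + m < b)) := by
  by_cases h1 : a + m ≤ b
  · exact ⟨a - 1, by omega, by omega⟩
  by_cases h2 : b + m ≤ n
  · exact ⟨b - 1, by omega, by omega⟩
  · exact ⟨b - 1 - m, by omega, by omega⟩

/-- The symmetric difference of two intervals has at most two runs. -/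
theorem Ico_iff_Ico_of_alternating {a b a' b' x₁ x₂ x₃ x₄ x₅ : ℕ} (h₁₂ : x₁ < x₂) (h₂₃ : x₂ < x₃)
    (h₃₄ : x₃ < x₄) (h₄₅ : x₄ < x₅) (h₁ : ¬((a ≤ x₁ ∧ x₁ < b) ↔ (a' ≤ x₁ ∧ x₁ < b')))
    (h₂ : (a ≤ x₂ ∧ x₂ < b) ↔ (a' ≤ x₂ ∧ x₂ < b')) (h₃ : ¬((a ≤ x₃ ∧ x₃ < b) ↔ (a' ≤ x₃ ∧ x₃ < b')))
    (h₄ : (a ≤ x₄ ∧ x₄ < b) ↔ (a' ≤ x₄ ∧ x₄ < b')) :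
    (a ≤ x₅ ∧ x₅ < b) ↔ (a' ≤ x₅ ∧ x₅ < b') := by
  omega

theorem exists_lt_sub_straddle_ne {n m a b a' b' j : ℕ} (hm : 0 < m) (h3m : 3 * m ≤ n)
    (ha : 0 < a) (ha' : 0 < a') (hj : j < n) (hjab : ¬((a ≤ j ∧ j < b) ↔ (a' ≤ j ∧ j < b'))) :
    ∃ i < n - m, ¬(((a ≤ i ∧ i < b) ↔ (a ≤ i + m ∧ i + m < b)) ↔
      ((a' ≤ i ∧ i < b') ↔ (a' ≤ i + m ∧ i + m < b'))) := by
  by_contra! h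
  set p : ℕ → Prop := fun i => (a ≤ i ∧ i < b) ↔ (a' ≤ i ∧ i < b') with hp
  have hper : ∀ i, i + m < n → (p i ↔ p (i + m)) := fun i hi => by
    have hi := h i (by omega)
    simp only [hp]
    clear * - hi
    tauto
  have hr : j % m < m := Nat.mod_lt _ hm
  have hpr : ¬p (j % m) := by
    rwa [← iff_add_mul_of_iff_add hper (j % m) (j / m) (by rwa [Nat.mod_add_div]), Nat.mod_add_div]
  -- `p` holds at `0`, hence at `m` and `2m`, and fails at `r = j % m`, `r + m` and `r + 2m`
  have hp0 : p 0 := by simp only [hp]; omega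
  have hpm := (iff_add_mul_of_iff_add hper 0 1 (by omega)).2 hp0
  have hp2m := (iff_add_mul_of_iff_add hper 0 2 (by omega)).2 hp0
  have hprm := (iff_add_mul_of_iff_add hper (j % m) 1 (by omega)).not.2 hpr
  have hpr2m := (iff_add_mul_of_iff_add hper (j % m) 2 (by omega)).not.2 hpr
  simp only [hp, Nat.zero_add, Nat.mul_one] at hpm hp2m hprm hpr2m hpr
  exact hpr2m (Ico_iff_Ico_of_alternating hr (by omega) (by omega) (by omega) hpr hpm hprm hp2m)

theorem List.Nodup.exists_Ico_of_isInfix {α : Type*} {l l' : List α} (hl : l.Nodup)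
    (h : l' <:+: l) :
    ∃ a, a + l'.length ≤ l.length ∧
      ∀ i (hi : i < l.length), l[i] ∈ l' ↔ a ≤ i ∧ i < a + l'.length := by
  obtain ⟨s, t, rfl⟩ := h
  have hget : ∀ k (hk : k < l'.length), (s ++ l' ++ t)[s.length + k]'(by simp; omega) = l'[k] := by
    intro k hk
    rw [List.getElem_append_left (by simp; omega), List.getElem_append_right (by omega)]
    simp
  refine ⟨s.length, by simp, fun i hi => ⟨fun hmem => ?_, fun ⟨h₁, h₂⟩ => ?_⟩⟩
  · obtain ⟨k, hk, hki⟩ := List.mem_iff_getElem.1 hmem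
    rw [← hget k hk, hl.getElem_inj_iff] at hki
    omega
  · have := hget (i - s.length) (by omega)
    simp only [Nat.add_sub_cancel' h₁] at this
    exact this ▸ List.getElem_mem _

theorem Finset.exists_list_isInfix_of_laminar {α : Type*} [DecidableEq α] (X : Finset α)
    (𝓕 : Finset (Finset α)) (hsub : ∀ A ∈ 𝓕, A ⊆ X)
    (hlam : ∀ A ∈ 𝓕, ∀ B ∈ 𝓕, A ⊆ B ∨ B ⊆ A ∨ Disjoint A B) :
    ∃ l : List α, l.Nodup ∧ l.toFinset = X ∧
      ∀ A ∈ 𝓕, ∃ l' : List α, l' <:+: l ∧ l'.toFinset = A := by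
  induction X using Finset.strongInduction generalizing 𝓕 with
  | H X ih =>
  suffices ∃ l : List α, l.Nodup ∧ l.toFinset = X ∧
      ∀ A ∈ 𝓕, A ≠ X → A.Nonempty → ∃ l' : List α, l' <:+: l ∧ l'.toFinset = A by
    obtain ⟨l, hl, hlX, hblocks⟩ := this
    refine ⟨l, hl, hlX, fun A hA => ?_⟩
    rcases eq_or_ne A X with rfl | hAX
    · exact ⟨l, List.infix_refl l, hlX⟩
    rcases A.eq_empty_or_nonempty with rfl | hA₀
    · exact ⟨[], List.nil_infix, rfl⟩
    · exact hblocks A hA hAX hA₀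
  set 𝓟 := 𝓕.filter fun A => A ≠ X ∧ A.Nonempty
  rcases 𝓟.eq_empty_or_nonempty with h𝓟 | h𝓟
  · refine ⟨X.toList, X.nodup_toList, X.toList_toFinset, fun A hA hAX hA₀ => ?_⟩
    exact absurd (h𝓟 ▸ mem_filter.2 ⟨hA, hAX, hA₀⟩ : A ∈ (∅ : Finset (Finset α))) (notMem_empty A)
  -- split `X` along a largest proper nonempty member `A`
  obtain ⟨A, hA𝓟, hAmax⟩ := 𝓟.exists_max_image card h𝓟
  obtain ⟨hA, hAX, hA₀⟩ := mem_filter.1 hA𝓟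
  obtain ⟨la, hla, hlaA, hinA⟩ := ih A (ssubset_iff_subset_ne.2 ⟨hsub A hA, hAX⟩)
    (𝓕.filter (· ⊆ A)) (fun B hB => (mem_filter.1 hB).2)
    (fun B hB C hC => hlam B (mem_filter.1 hB).1 C (mem_filter.1 hC).1)
  obtain ⟨lb, hlb, hlbA, hinB⟩ := ih (X \ A) (sdiff_ssubset (hsub A hA) hA₀)
    (𝓕.filter (Disjoint · A))
    (fun B hB => subset_sdiff.2 ⟨hsub B (mem_filter.1 hB).1, (mem_filter.1 hB).2⟩)
    (fun B hB C hC => hlam B (mem_filter.1 hB).1 C (mem_filter.1 hC).1)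
  have hdisj : la.Disjoint lb := fun x hxa hxb => by
    rw [← List.mem_toFinset, hlaA] at hxa
    rw [← List.mem_toFinset, hlbA] at hxb
    exact (mem_sdiff.1 hxb).2 hxa
  refine ⟨la ++ lb, hla.append hlb hdisj, by
    rw [List.toFinset_append, hlaA, hlbA, union_sdiff_of_subset (hsub A hA)],
    fun B hB hBX hB₀ => ?_⟩
  rcases hlam B hB A hA with hBA | hAB | hBA
  · obtain ⟨l', h', hl'⟩ := hinA B (mem_filter.2 ⟨hB, hBA⟩)
    exact ⟨l', h'.trans (List.prefix_append _ _).isInfix, hl'⟩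
  · have hAB : A = B := eq_of_subset_of_card_le hAB (hAmax B (mem_filter.2 ⟨hB, hBX, hB₀⟩))
    exact ⟨la, (List.prefix_append _ _).isInfix, hAB ▸ hlaA⟩
  · obtain ⟨l', h', hl'⟩ := hinB B (mem_filter.2 ⟨hB, hBA⟩)
    exact ⟨l', h'.trans (List.suffix_append _ _).isInfix, hl'⟩

namespace SimpleGraph

variable {G : SimpleGraph V} {v₀ a b x y : V} {e f : Sym2 V} {ℓ : ℕ → V} {n m : ℕ}

theorem reachable_deleteEdges_singleton_iff :
    (G.deleteEdges {e}).Reachable a b ↔ ∃ p : G.Walk a b, e ∉ p.edges := by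
  induction e with
  | _ u w => exact reachable_deleteEdges_iff_exists_walk

theorem Reachable.deleteEdges_or_exists_mem (h : G.Reachable a b) (e : Sym2 V) :
    (G.deleteEdges {e}).Reachable a b ∨ ∃ t ∈ e, (G.deleteEdges {e}).Reachable a t := by
  obtain ⟨p⟩ := h
  induction p with
  | nil => exact Or.inl .rfl
  | @cons u w z huw q ih =>
    by_cases hue : s(u, w) = e
    · exact Or.inr ⟨u, hue ▸ Sym2.mem_mk_left u w, .rfl⟩
    · have hadj : (G.deleteEdges {e}).Adj u w := by simpa [deleteEdges_adj] using ⟨huw, hue⟩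
      exact ih.imp hadj.reachable.trans fun ⟨t, ht, hwt⟩ => ⟨t, ht, hadj.reachable.trans hwt⟩

theorem Preconnected.exists_mem_reachable_deleteEdges (hG : G.Preconnected)
    (h : ¬(G.deleteEdges {e}).Reachable a b) : ∃ t ∈ e, (G.deleteEdges {e}).Reachable a t :=
  ((hG a b).deleteEdges_or_exists_mem e).resolve_left h

theorem IsAcyclic.mem_edges_iff_not_reachable (hG : G.IsAcyclic) {p : G.Walk a b}
    (hp : p.IsPath) : e ∈ p.edges ↔ ¬(G.deleteEdges {e}).Reachable a b := by
  rw [reachable_deleteEdges_singleton_iff, not_exists_not]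
  refine ⟨fun he q => ?_, fun h => h p⟩
  have hpq : p = q.bypass :=
    congrArg Subtype.val ((hG.subsingleton_path a b).elim ⟨p, hp⟩ ⟨q.bypass, q.bypass_isPath⟩)
  exact q.edges_bypass_subset_edges (hpq ▸ he)

def farSide (G : SimpleGraph V) (v₀ : V) (e : Sym2 V) : Set V :=
  {x | ¬(G.deleteEdges {e}).Reachable v₀ x}

theorem root_notMem_farSide : v₀ ∉ G.farSide v₀ e := fun h => h .rfl

theorem mem_farSide_of_reachable (hx : x ∈ G.farSide v₀ e)
    (h : (G.deleteEdges {e}).Reachable x y) : y ∈ G.farSide v₀ e :=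
  fun hy => hx (hy.trans h.symm)

theorem mem_farSide_of_adj (hx : x ∈ G.farSide v₀ e) (h : G.Adj x y) (hne : s(x, y) ≠ e) :
    y ∈ G.farSide v₀ e :=
  mem_farSide_of_reachable hx (Adj.reachable (by simpa [deleteEdges_adj] using ⟨h, hne⟩))

theorem Preconnected.reachable_deleteEdges_iff (hG : G.Preconnected) :
    (G.deleteEdges {e}).Reachable a b ↔ (a ∈ G.farSide v₀ e ↔ b ∈ G.farSide v₀ e) := by
  refine ⟨fun h => ⟨fun ha => mem_farSide_of_reachable ha h,
    fun hb => mem_farSide_of_reachable hb h.symm⟩, fun hab => ?_⟩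
  by_cases ha : a ∈ G.farSide v₀ e
  · have hb := hab.1 ha
    -- `a`, `b` reach endpoints `t`, `t'` of `e`, and `t ≠ t'` would leave none for `v₀` to reach
    obtain ⟨t, hte, hat⟩ := hG.exists_mem_reachable_deleteEdges fun h => ha h.symm
    obtain ⟨t', ht'e, hbt'⟩ := hG.exists_mem_reachable_deleteEdges fun h => hb h.symm
    obtain ⟨s, hse, hs⟩ := hG.exists_mem_reachable_deleteEdges ha
    obtain rfl | htt' := eq_or_ne t t'
    · exact hat.trans hbt'.symm
    obtain rfl := (Sym2.mem_and_mem_iff htt').1 ⟨hte, ht'e⟩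
    rcases Sym2.mem_iff.1 hse with rfl | rfl
    · exact absurd hs (mem_farSide_of_reachable ha hat)
    · exact absurd hs (mem_farSide_of_reachable hb hbt')
  · exact (not_not.1 ha).symm.trans (not_not.1 (mt hab.2 ha))

theorem farSide_subset_of_forall_mem (h : ∀ t ∈ f, t ∈ G.farSide v₀ e) :
    G.farSide v₀ f ⊆ G.farSide v₀ e := fun z hz hv₀z => by
  rcases hv₀z.deleteEdges_or_exists_mem f with hr | ⟨t, htf, hr⟩
  · exact hz (hr.mono (deleteEdges_mono (deleteEdges_le _)))
  · exact h t htf (hr.mono (deleteEdges_le _))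

theorem forall_mem_farSide_of_exists (hf : f ∈ G.edgeSet) (hfe : f ≠ e)
    (h : ∃ t ∈ f, t ∈ G.farSide v₀ e) : ∀ t ∈ f, t ∈ G.farSide v₀ e := by
  induction f with
  | _ u w =>
  have huw : u ∈ G.farSide v₀ e ↔ w ∈ G.farSide v₀ e :=
    ⟨fun hu => mem_farSide_of_adj hu hf hfe,
      fun hw => mem_farSide_of_adj hw (G.adj_symm hf) (Sym2.eq_swap ▸ hfe)⟩
  obtain ⟨t, ht, htS⟩ := h
  intro t' ht'
  rcases Sym2.mem_iff.1 ht with rfl | rfl <;> rcases Sym2.mem_iff.1 ht' with rfl | rfl <;> tauto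

theorem Preconnected.farSide_laminar (hG : G.Preconnected) (he : e ∈ G.edgeSet)
    (hf : f ∈ G.edgeSet) :
    G.farSide v₀ f ⊆ G.farSide v₀ e ∨ G.farSide v₀ e ⊆ G.farSide v₀ f ∨
      Disjoint (G.farSide v₀ e) (G.farSide v₀ f) := by
  obtain rfl | hef := eq_or_ne e f
  · exact Or.inl subset_rfl
  by_cases hfe : ∃ t ∈ f, t ∈ G.farSide v₀ e
  · exact Or.inl (farSide_subset_of_forall_mem (forall_mem_farSide_of_exists hf hef.symm hfe))
  by_cases hef' : ∃ t ∈ e, t ∈ G.farSide v₀ f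
  · exact Or.inr (Or.inl (farSide_subset_of_forall_mem (forall_mem_farSide_of_exists he hef hef')))
  refine Or.inr (Or.inr (Set.disjoint_left.2 fun z hze hzf => ?_))
  obtain ⟨t, hte, hzt⟩ := hG.exists_mem_reachable_deleteEdges fun h => hze h.symm
  rcases hzt.deleteEdges_or_exists_mem f with hr | ⟨s, hsf, hr⟩
  · exact hef' ⟨t, hte,
      mem_farSide_of_reachable hzf (hr.mono (deleteEdges_mono (deleteEdges_le _)))⟩
  · exact hfe ⟨s, hsf, mem_farSide_of_reachable hze (hr.mono (deleteEdges_le _))⟩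

theorem IsTree.mem_edges_iff_mem_farSide (hT : G.IsTree) {p : G.Walk a b} (hp : p.IsPath) :
    e ∈ p.edges ↔ ¬(a ∈ G.farSide v₀ e ↔ b ∈ G.farSide v₀ e) := by
  rw [hT.isAcyclic.mem_edges_iff_not_reachable hp,
    hT.connected.preconnected.reachable_deleteEdges_iff]

theorem IsTree.mem_farSide_iff_notMem_of_adj (hT : G.IsTree) (h : G.Adj x y) :
    x ∈ G.farSide v₀ s(x, y) ↔ y ∉ G.farSide v₀ s(x, y) := by
  have hbridge : ¬(G.deleteEdges {s(x, y)}).Reachable x y :=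
    isAcyclic_iff_forall_adj_isBridge.1 hT.isAcyclic h
  rw [hT.connected.preconnected.reachable_deleteEdges_iff (v₀ := v₀)] at hbridge
  tauto

theorem IsTree.farSide_nonempty (hT : G.IsTree) (he : e ∈ G.edgeSet) :
    (G.farSide v₀ e).Nonempty := by
  induction e with
  | _ x y =>
  by_cases hx : x ∈ G.farSide v₀ s(x, y)
  · exact ⟨x, hx⟩
  · exact ⟨y, not_not.1 (mt (hT.mem_farSide_iff_notMem_of_adj he).2 hx)⟩

theorem IsTree.farSide_sdiff_nonempty (hT : G.IsTree) (hf : f ∈ G.edgeSet) (hfe : f ≠ e)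
    (hsub : G.farSide v₀ f ⊆ G.farSide v₀ e) : (G.farSide v₀ e \ G.farSide v₀ f).Nonempty := by
  induction f with
  | _ u w =>
  by_cases hu : u ∈ G.farSide v₀ s(u, w)
  · exact ⟨w, mem_farSide_of_adj (hsub hu) hf hfe, (hT.mem_farSide_iff_notMem_of_adj hf).1 hu⟩
  · have hw := not_not.1 (mt (hT.mem_farSide_iff_notMem_of_adj hf).2 hu)
    exact ⟨u, mem_farSide_of_adj (hsub hw) (G.adj_symm hf) (Sym2.eq_swap ▸ hfe), hu⟩

theorem dist_lt_of_mem_farSide (hx : G.Reachable v₀ x) (h : x ∈ G.farSide v₀ s(x, y)) :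
    G.dist v₀ y < G.dist v₀ x := by
  obtain ⟨p, hp⟩ := hx.exists_walk_length_eq_dist
  have he : s(x, y) ∈ p.edges := by
    by_contra he
    exact h (reachable_deleteEdges_singleton_iff.2 ⟨p, he⟩)
  have hy : y ∈ p.support := p.snd_mem_support_of_mem_edges he
  have hyx : y ≠ x := (G.mem_edgeSet.1 (p.edges_subset_edgeSet he)).ne'
  calc G.dist v₀ y ≤ (p.takeUntil y hy).length := dist_le _
    _ < p.length := p.length_takeUntil_lt_length hy hyx
    _ = G.dist v₀ x := hp

theorem IsTree.eq_of_adj_of_dist_lt {y' : V} (hT : G.IsTree) (hy : G.Adj x y) (hy' : G.Adj x y')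
    (hyx : G.dist v₀ y < G.dist v₀ x) (hy'x : G.dist v₀ y' < G.dist v₀ x) : y = y' := by
  obtain ⟨p, hp, -⟩ := (hT.connected v₀ x).exists_path_of_dist
  suffices ∀ z, G.Adj x z → G.dist v₀ z < G.dist v₀ x → z = p.penultimate from
    (this y hy hyx).trans (this y' hy' hy'x).symm
  intro z hz hzx
  have hxS : x ∈ G.farSide v₀ s(x, z) := by
    by_contra hxS
    have hzS := not_not.1 (mt (hT.mem_farSide_iff_notMem_of_adj hz).2 hxS)
    rw [Sym2.eq_swap] at hzS
    exact (dist_lt_of_mem_farSide (hT.connected v₀ z) hzS).not_gt hzx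
  have he : s(x, z) ∈ p.edges :=
    (hT.mem_edges_iff_mem_farSide hp).2 fun h => root_notMem_farSide (h.2 hxS)
  exact hT.isAcyclic.eq_penultimate_of_adj_end hp hz (p.snd_mem_support_of_mem_edges he)

section Leaves

variable [Fintype V]

/-- A farthest vertex `x` of `S` from `v₀` has at most one neighbour closer to `v₀` and, by
`hdown`, at most one farther away, so it is a leaf. -/
theorem IsTree.exists_degree_eq_one (hT : G.IsTree) (hdeg : ∀ v, G.degree v ≠ 2) {S : Set V}
    (hS : S.Nonempty) (hv₀ : v₀ ∉ S) (f : Sym2 V)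
    (hdown : ∀ x ∈ S, ∀ y, G.Adj x y → y ∉ S → G.dist v₀ x < G.dist v₀ y → s(x, y) = f) :
    ∃ x ∈ S, G.degree x = 1 := by
  obtain ⟨x, hxS, hmax⟩ := S.exists_max_image (G.dist v₀) S.toFinite hS
  refine ⟨x, hxS, ?_⟩
  set up := (G.neighborFinset x).filter fun y => G.dist v₀ y < G.dist v₀ x
  set down := (Finset.univ : Finset V).filter fun y => s(x, y) = f
  have hsub : G.neighborFinset x ⊆ up ∪ down := fun y hy => by
    rw [mem_neighborFinset] at hy
    rcases (hT.dist_ne_of_adj v₀ hy).lt_or_gt with hlt | hlt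
    · exact Finset.mem_union_right _ (Finset.mem_filter.2
        ⟨Finset.mem_univ _, hdown x hxS y hy (fun hyS => (hmax y hyS).not_gt hlt) hlt⟩)
    · exact Finset.mem_union_left _ (Finset.mem_filter.2 ⟨(mem_neighborFinset _ _ _).2 hy, hlt⟩)
  have hup_card : up.card ≤ 1 := Finset.card_le_one.2 fun y hy y' hy' => by
    simp only [up, Finset.mem_filter, mem_neighborFinset] at hy hy'
    exact hT.eq_of_adj_of_dist_lt hy.1 hy'.1 hy.2 hy'.2
  have hdown_card : down.card ≤ 1 := Finset.card_le_one.2 fun y hy y' hy' => by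
    simp only [down, Finset.mem_filter] at hy hy'
    exact Sym2.congr_right.1 (hy.2.trans hy'.2.symm)
  have hpos : 0 < G.degree x := by
    have := nontrivial_of_ne x v₀ (ne_of_mem_of_not_mem hxS hv₀)
    obtain ⟨w, hw⟩ := hT.connected.preconnected.exists_adj_of_nontrivial x
    exact G.degree_pos_iff_exists_adj x |>.2 ⟨w, hw⟩
  have := (Finset.card_le_card hsub).trans (Finset.card_union_le up down)
  rw [card_neighborFinset_eq_degree] at this
  have := hdeg x
  omega

theorem IsTree.exists_leaf_mem_farSide (hT : G.IsTree) (hdeg : ∀ v, G.degree v ≠ 2)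
    (he : e ∈ G.edgeSet) : ∃ x ∈ G.farSide v₀ e, G.degree x = 1 :=
  hT.exists_degree_eq_one hdeg (hT.farSide_nonempty he) root_notMem_farSide e
    fun _ hx _ hxy hy _ => by_contra fun hne => hy (mem_farSide_of_adj hx hxy hne)

theorem IsTree.exists_leaf_mem_farSide_sdiff (hT : G.IsTree) (hdeg : ∀ v, G.degree v ≠ 2)
    (hne : (G.farSide v₀ e \ G.farSide v₀ f).Nonempty) :
    ∃ x ∈ G.farSide v₀ e \ G.farSide v₀ f, G.degree x = 1 := by
  refine hT.exists_degree_eq_one hdeg hne (fun h => root_notMem_farSide h.1) f ?_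
  rintro x ⟨hxe, hxf⟩ y hxy hy hxy_dist
  by_cases hye : y ∈ G.farSide v₀ e
  · have hyf : y ∈ G.farSide v₀ f := by_contra fun h => hy ⟨hye, h⟩
    exact by_contra fun hne => hxf (mem_farSide_of_adj hyf (G.adj_symm hxy) (Sym2.eq_swap ▸ hne))
  · obtain rfl : s(x, y) = e := by_contra fun hne => hye (mem_farSide_of_adj hxe hxy hne)
    exact absurd hxy_dist (dist_lt_of_mem_farSide (hT.connected v₀ x) hxe).not_gt

theorem IsTree.exists_leaf_separating (hT : G.IsTree) (hdeg : ∀ v, G.degree v ≠ 2)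
    (he : e ∈ G.edgeSet) (hf : f ∈ G.edgeSet) (hef : e ≠ f) :
    ∃ x, G.degree x = 1 ∧ ¬(x ∈ G.farSide v₀ e ↔ x ∈ G.farSide v₀ f) := by
  rcases hT.connected.preconnected.farSide_laminar (v₀ := v₀) he hf with h | h | h
  · obtain ⟨x, hx, hx1⟩ :=
      hT.exists_leaf_mem_farSide_sdiff hdeg (hT.farSide_sdiff_nonempty hf hef.symm h)
    exact ⟨x, hx1, fun hiff => hx.2 (hiff.1 hx.1)⟩
  · obtain ⟨x, hx, hx1⟩ :=
      hT.exists_leaf_mem_farSide_sdiff hdeg (hT.farSide_sdiff_nonempty he hef h)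
    exact ⟨x, hx1, fun hiff => hx.2 (hiff.2 hx.1)⟩
  · obtain ⟨x, hx, hx1⟩ := hT.exists_leaf_mem_farSide hdeg he
    exact ⟨x, hx1, fun hiff => Set.disjoint_left.1 h hx (hiff.1 hx)⟩

end Leaves

def FarSidesAreBlocks (G : SimpleGraph V) (v₀ : V) (ℓ : ℕ → V) (n : ℕ) : Prop :=
  ∀ e ∈ G.edgeSet, ∃ a b, 0 < a ∧ a < b ∧ b ≤ n ∧
    ∀ i < n, (ℓ i ∈ G.farSide v₀ e ↔ a ≤ i ∧ i < b)

theorem Preconnected.exists_list_leaves [Fintype V] (hG : G.Preconnected)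
    (hv₀ : G.degree v₀ = 1) :
    ∃ l : List V, (v₀ :: l).Nodup ∧ (∀ x, x ∈ v₀ :: l ↔ G.degree x = 1) ∧
      ∀ e ∈ G.edgeSet, ∃ B : List V, B <:+: l ∧
        ∀ x, x ∈ B ↔ G.degree x = 1 ∧ x ∈ G.farSide v₀ e := by
  set X := (Finset.univ.filter fun x => G.degree x = 1).erase v₀
  obtain ⟨l, hl, hlX, hblocks⟩ := X.exists_list_isInfix_of_laminar
    (G.edgeFinset.image fun e => X.filter (· ∈ G.farSide v₀ e))
    (by simp [Finset.filter_subset]) (by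
      simp only [Finset.mem_image, mem_edgeFinset]
      rintro _ ⟨e, he, rfl⟩ _ ⟨f, hf, rfl⟩
      rcases hG.farSide_laminar (v₀ := v₀) he hf with h | h | h
      · exact Or.inr (Or.inl (Finset.monotone_filter_right _ fun x _ hx => h hx))
      · exact Or.inl (Finset.monotone_filter_right _ fun x _ hx => h hx)
      · exact Or.inr (Or.inr (Finset.disjoint_filter.2 fun x _ hx => Set.disjoint_left.1 h hx)))
  refine ⟨l, List.nodup_cons.2 ⟨fun h => by simpa [X, hlX] using List.mem_toFinset.2 h, hl⟩,
    fun x => ?_, fun e he => ?_⟩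
  · rw [List.mem_cons, ← List.mem_toFinset, hlX]
    rcases eq_or_ne x v₀ with rfl | hx <;> simp [X, *]
  obtain ⟨B, hBl, hB⟩ := hblocks _ (Finset.mem_image_of_mem _ (mem_edgeFinset.2 he))
  refine ⟨B, hBl, fun x => ?_⟩
  rw [← List.mem_toFinset, hB, Finset.mem_filter, Finset.mem_erase, Finset.mem_filter]
  exact ⟨fun h => ⟨h.1.2.2, h.2⟩,
    fun h => ⟨⟨fun hx₀ => root_notMem_farSide (hx₀ ▸ h.2), Finset.mem_univ _, h.1⟩, h.2⟩⟩

theorem IsTree.exists_farSidesAreBlocks [Fintype V] (hT : G.IsTree)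
    (hdeg : ∀ v, G.degree v ≠ 2) (hv₀ : G.degree v₀ = 1) :
    ∃ ℓ : ℕ → V, (∀ x, G.degree x = 1 → ∃ i < leafCount G, ℓ i = x) ∧
      FarSidesAreBlocks G v₀ ℓ (leafCount G) := by
  obtain ⟨l, hL, hmemL, hblocks⟩ := hT.connected.preconnected.exists_list_leaves hv₀
  set L := v₀ :: l
  have hlen : L.length = leafCount G := by
    rw [leafCount, ← List.toFinset_card_of_nodup hL, Nat.card_coe_set_eq, ← Set.ncard_coe_finset]
    congr 1
    ext x
    simp [hmemL]
  refine ⟨fun i => L.getD i v₀, fun x hx => ?_, fun e he => ?_⟩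
  · obtain ⟨i, hi, rfl⟩ := List.mem_iff_getElem.1 ((hmemL x).2 hx)
    exact ⟨i, hlen ▸ hi, L.getD_eq_getElem _ hi⟩
  obtain ⟨B, hBl, hB⟩ := hblocks e he
  obtain ⟨a, haB, hBi⟩ := hL.exists_Ico_of_isInfix (hBl.trans (List.suffix_cons v₀ l).isInfix)
  have hmemB : ∀ x ∈ L, x ∈ B ↔ x ∈ G.farSide v₀ e := fun x hx =>
    (hB x).trans (and_iff_right ((hmemL x).1 hx))
  obtain ⟨x, hxS, hx1⟩ := hT.exists_leaf_mem_farSide (v₀ := v₀) hdeg he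
  have hB₀ : 0 < B.length := List.length_pos_of_mem ((hB x).2 ⟨hx1, hxS⟩)
  have hv₀B : ¬(a ≤ 0 ∧ 0 < a + B.length) := fun h =>
    root_notMem_farSide ((hB v₀).1 ((hBi 0 (by simp [L])).2 h)).2
  refine ⟨a, a + B.length, by omega, by omega, by omega, fun i hi => ?_⟩
  rw [← hlen] at hi
  show L.getD i v₀ ∈ _ ↔ _
  rw [List.getD_eq_getElem _ _ hi, ← hmemB _ (List.getElem_mem hi), hBi i hi]

noncomputable def IsTree.pathIn (hT : G.IsTree) (a b : V) : PathIn G :=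
  ⟨a, b, (hT.connected a b).some.toPath⟩

theorem IsTree.emem_pathIn_iff (hT : G.IsTree) :
    (hT.pathIn a b).emem e ↔ ¬(a ∈ G.farSide v₀ e ↔ b ∈ G.farSide v₀ e) :=
  hT.mem_edges_iff_mem_farSide (hT.connected a b).some.toPath.2

noncomputable def IsTree.shiftPaths (hT : G.IsTree) (ℓ : ℕ → V) (n m : ℕ) : Set (PathIn G) :=
  (fun i => hT.pathIn (ℓ i) (ℓ (i + m))) '' Set.Iio (n - m)

theorem IsTree.ncard_shiftPaths_le (hT : G.IsTree) : (hT.shiftPaths ℓ n m).ncard ≤ n - m :=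
  (Set.ncard_image_le (Set.finite_Iio _)).trans (Set.ncard_Iio_nat _).le

theorem IsTree.edgeCover_shiftPaths (hT : G.IsTree) (hℓ : FarSidesAreBlocks G v₀ ℓ n)
    (hm : 0 < m) (h2m : 2 * m ≤ n) : EdgeCover G (hT.shiftPaths ℓ n m) := by
  intro e he
  obtain ⟨a, b, ha, hab, hb, hblock⟩ := hℓ e he
  obtain ⟨i, hi, hstraddle⟩ := exists_lt_sub_straddle hm h2m ha hab hb
  refine ⟨_, ⟨i, hi, rfl⟩, ?_⟩
  rwa [hT.emem_pathIn_iff (v₀ := v₀), hblock i (by omega), hblock (i + m) (by omega)]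

/-- For `n ≤ 2` the only possible block is `[1, 2)`, so there is nothing to separate. -/
theorem IsTree.edgeSep_shiftPaths (hT : G.IsTree) (hℓ : FarSidesAreBlocks G v₀ ℓ n)
    (hdist : ∀ e ∈ G.edgeSet, ∀ f ∈ G.edgeSet, e ≠ f →
      ∃ j < n, ¬(ℓ j ∈ G.farSide v₀ e ↔ ℓ j ∈ G.farSide v₀ f))
    (hm : 0 < m) (h3m : 3 * m ≤ n ∨ n ≤ 2) : EdgeSep G (hT.shiftPaths ℓ n m) := by
  intro e he f hf hef
  obtain ⟨a, b, ha, hab, hb, hblock⟩ := hℓ e he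
  obtain ⟨a', b', ha', hab', hb', hblock'⟩ := hℓ f hf
  obtain ⟨j, hj, hjef⟩ := hdist e he f hf hef
  rw [hblock j hj, hblock' j hj] at hjef
  obtain ⟨i, hi, hsep⟩ := h3m.elim
    (fun h3m => exists_lt_sub_straddle_ne hm h3m ha ha' hj hjef) fun hn => (hjef (by omega)).elim
  refine ⟨_, ⟨i, hi, rfl⟩, ?_⟩
  rw [hT.emem_pathIn_iff (v₀ := v₀), hT.emem_pathIn_iff (v₀ := v₀), hblock i (by omega),
    hblock (i + m) (by omega), hblock' i (by omega), hblock' (i + m) (by omega)]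
  exact ((xor_iff_not_iff _ _).2 (not_iff_not.not.2 hsep)).imp id And.symm

theorem IsTree.exists_edgeSep_edgeCover_of_farSidesAreBlocks (hT : G.IsTree) (hn : 2 ≤ n)
    (hℓ : FarSidesAreBlocks G v₀ ℓ n)
    (hdist : ∀ e ∈ G.edgeSet, ∀ f ∈ G.edgeSet, e ≠ f →
      ∃ j < n, ¬(ℓ j ∈ G.farSide v₀ e ↔ ℓ j ∈ G.farSide v₀ f)) :
    ∃ F : Set (PathIn G), F.Finite ∧ EdgeSep G F ∧ EdgeCover G F ∧ F.ncard ≤ (2 * n + 2) / 3 := by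
  set m := max 1 (n / 3)
  refine ⟨hT.shiftPaths ℓ n m, (Set.finite_Iio _).image _,
    hT.edgeSep_shiftPaths hℓ hdist (by omega) (by omega),
    hT.edgeCover_shiftPaths hℓ (by omega) (by omega), ?_⟩
  have := hT.ncard_shiftPaths_le (ℓ := ℓ) (n := n) (m := m)
  omega

end SimpleGraph

theorem stmt6 [Fintype V] (G : SimpleGraph V) (hT : G.IsTree)
    (hdeg : ∀ v : V, G.degree v ≠ 2) :
    ∃ F : Set (PathIn G), F.Finite ∧ EdgeSep G F ∧ EdgeCover G F ∧
      F.ncard ≤ (2 * leafCount G + 2) / 3 := by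
  obtain hE | ⟨e₀, he₀⟩ := G.edgeSet.eq_empty_or_nonempty
  · exact ⟨∅, Set.finite_empty, by simp [EdgeSep, hE], by simp [EdgeCover, hE], by simp⟩
  obtain ⟨v₀, -, hv₀⟩ := hT.exists_leaf_mem_farSide (v₀ := hT.connected.nonempty.some) hdeg he₀
  obtain ⟨ℓ, hleaves, hℓ⟩ := hT.exists_farSidesAreBlocks hdeg hv₀
  have hn : 2 ≤ leafCount G := by
    obtain ⟨a, b, ha, hab, hb, -⟩ := hℓ e₀ he₀
    omega
  refine hT.exists_edgeSep_edgeCover_of_farSidesAreBlocks hn hℓ fun e he f hf hef => ?_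
  obtain ⟨x, hx, hxef⟩ := hT.exists_leaf_separating (v₀ := v₀) hdeg he hf hef
  obtain ⟨i, hi, rfl⟩ := hleaves x hx
  exact ⟨i, hi, hxef⟩
end

section
/- Let T be a tree on at least 4 vertices in which every vertex has degree 1 or 3. Then every family of paths in T that separates and covers V(T) ∪ E*(T) has size at least h₁(T), the number of leaves of T. -/
open SimpleGraph
open scoped Classical

universe u

variable {V : Type u}

/-!
Count path ends. Each path has two ends, so `2 |F|` is the total number of ends. Along a path,
every vertex `v` it visits has exactly two incidences: the path edges at `v` plus the ends equal
to `v`. Hence a path meeting the leaf star of a degree-3 vertex `w` (`w` and its `k` leaf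
neighbours) has exactly `2 - j` ends in it, `j` being the number of interior edges at `w` it uses.
Separating `w`, its leaf neighbours and its interior edges (four elements) needs at least three
paths meeting the leaf star, and a short case analysis on `k` then gives at least `2 k` ends in
it. Since every leaf lies in exactly one leaf star, summing gives `2 h₁(T) ≤ 2 |F|`.
-/

namespace SimpleGraph

theorem Walk.IsPath.ncard_neighborSet_toSubgraph_add_ite {G : SimpleGraph V} {a b v : V}
    {p : G.Walk a b} (hp : p.IsPath) (hv : v ∈ p.support) :
    (p.toSubgraph.neighborSet v).ncard + ((if a = v then 1 else 0) + (if b = v then 1 else 0))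
      = 2 := by
  by_cases hnil : p.Nil
  · obtain rfl : a = b := hnil.eq
    obtain rfl : v = a := by simpa [hnil.eq_nil] using hv
    simp [hnil.eq_nil]
  have hab : a ≠ b := fun h => hnil (hp.nil_iff_eq.mpr h)
  by_cases hva : a = v
  · subst hva
    simp [hp.neighborSet_toSubgraph_startpoint hnil, hab.symm]
  by_cases hvb : b = v
  · subst hvb
    simp [hp.neighborSet_toSubgraph_endpoint hnil, hva]
  obtain ⟨i, rfl, hi⟩ := mem_support_iff_exists_getVert.mp hv
  have hi0 : i ≠ 0 := by rintro rfl; simp at hva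
  have hil : i < p.length := lt_of_le_of_ne hi (by rintro rfl; simp at hvb)
  simp [hp.ncard_neighborSet_toSubgraph_internal_eq_two hi0 hil, hva, hvb]

theorem Walk.mem_of_forall_adj_mem {G : SimpleGraph V} {s : Set V}
    (hs : ∀ a ∈ s, ∀ b, G.Adj a b → b ∈ s) {x y : V} (p : G.Walk x y) (hx : x ∈ s) : y ∈ s := by
  induction p with
  | nil => exact hx
  | cons h _ ih => exact ih (hs _ hx _ h)

noncomputable def leafNeighborFinset (G : SimpleGraph V) [Fintype V] (w : V) : Finset V :=
  (G.neighborFinset w).filter (G.degree · = 1)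

variable {G : SimpleGraph V} [Fintype V] {u w : V}

theorem mem_leafNeighborFinset : u ∈ G.leafNeighborFinset w ↔ G.Adj w u ∧ G.degree u = 1 := by
  simp [leafNeighborFinset]

theorem leafNeighborFinset_subset : G.leafNeighborFinset w ⊆ G.neighborFinset w :=
  Finset.filter_subset _ _

theorem card_sdiff_leafNeighborFinset_add (hw : G.degree w = 3) :
    (G.neighborFinset w \ G.leafNeighborFinset w).card + (G.leafNeighborFinset w).card = 3 := by
  rw [Finset.card_sdiff_add_card_eq_card leafNeighborFinset_subset, card_neighborFinset_eq_degree,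
    hw]

theorem neighborSet_eq_singleton_of_degree_eq_one (hu : G.degree u = 1) (h : G.Adj u w) :
    G.neighborSet u = {w} := by
  obtain ⟨z, -, huniq⟩ := degree_eq_one_iff_existsUnique_adj.mp hu
  ext x
  exact ⟨fun hx => (huniq x hx).trans (huniq w h).symm, fun hx => hx ▸ h⟩

theorem Connected.degree_ne_one_of_adj_of_degree_eq_one (hG : G.Connected)
    (hcard : 3 ≤ Fintype.card V) (hu : G.degree u = 1) (h : G.Adj u w) : G.degree w ≠ 1 := by
  intro hw
  have hclosed : ∀ a ∈ ({u, w} : Set V), ∀ b, G.Adj a b → b ∈ ({u, w} : Set V) := by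
    rintro a (rfl | rfl) b hab
    · exact Or.inr ((neighborSet_eq_singleton_of_degree_eq_one hu h).subset hab)
    · exact Or.inl ((neighborSet_eq_singleton_of_degree_eq_one hw h.symm).subset hab)
  have huniv : Finset.univ ⊆ {u, w} := fun v _ => by
    simpa using (hG.preconnected u v).some.mem_of_forall_adj_mem hclosed (Or.inl rfl)
  have := (Finset.card_le_card huniv).trans (Finset.card_insert_le _ _)
  simp at this
  omega

theorem sum_sum_leafNeighborFinset {M : Type*} [AddCommMonoid M]
    (hleaf : ∀ u w, G.degree u = 1 → G.Adj u w → G.degree w = 3) (g : V → M) :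
    ∑ w ∈ Finset.univ.filter (G.degree · = 3), ∑ u ∈ G.leafNeighborFinset w, g u =
      ∑ u ∈ Finset.univ.filter (G.degree · = 1), g u := by
  rw [Finset.sum_comm' (t' := Finset.univ.filter (G.degree · = 1))
    (s' := fun u => G.neighborFinset u)]
  · refine Finset.sum_congr rfl fun u hu => ?_
    rw [Finset.sum_const, card_neighborFinset_eq_degree, (Finset.mem_filter.mp hu).2, one_smul]
  · intro w u
    simp only [Finset.mem_filter, Finset.mem_univ, true_and, mem_leafNeighborFinset,
      mem_neighborFinset]
    exact ⟨fun ⟨_, h, hu⟩ => ⟨h.symm, hu⟩, fun ⟨h, hu⟩ => ⟨hleaf u w hu h, h.symm, hu⟩⟩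

end SimpleGraph

namespace PathIn

variable {G : SimpleGraph V} (P : PathIn G) {u v w : V}

def toSubgraph : G.Subgraph := P.2.2.1.toSubgraph

noncomputable def endCount (v : V) : ℕ :=
  (if P.1 = v then 1 else 0) + (if P.2.1 = v then 1 else 0)

variable {P}

theorem toSubgraph_adj_iff : P.toSubgraph.Adj v w ↔ P.emem s(v, w) :=
  SimpleGraph.Walk.adj_toSubgraph_iff_mem_edges

theorem vmem_of_emem {e : Sym2 V} (he : P.emem e) (hv : v ∈ e) : P.vmem v :=
  SimpleGraph.Walk.mem_support_of_mem_edges he hv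

theorem ncard_neighborSet_add_endCount (hv : P.vmem v) :
    (P.toSubgraph.neighborSet v).ncard + P.endCount v = 2 :=
  P.2.2.2.ncard_neighborSet_toSubgraph_add_ite hv

theorem neighborSet_eq_empty (hv : ¬ P.vmem v) : P.toSubgraph.neighborSet v = ∅ :=
  Set.eq_empty_of_forall_notMem fun _ h =>
    hv (vmem_of_emem (toSubgraph_adj_iff.mp h) (Sym2.mem_mk_left _ _))

theorem endCount_eq_zero (hv : ¬ P.vmem v) : P.endCount v = 0 := by
  have h1 : P.1 ≠ v := fun h => hv (h ▸ P.2.2.1.start_mem_support)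
  have h2 : P.2.1 ≠ v := fun h => hv (h ▸ P.2.2.1.end_mem_support)
  simp [endCount, h1, h2]

theorem endCount_eq_two_iff : P.endCount v = 2 ↔ P.1 = v ∧ P.2.1 = v := by
  unfold endCount
  split_ifs <;> simp_all

theorem eq_of_endCount_eq_two (h : P.endCount v = 2) (hu : P.vmem u) : u = v := by
  obtain ⟨a, b, p, hp⟩ := P
  obtain ⟨rfl, rfl⟩ : a = v ∧ b = v := endCount_eq_two_iff.mp h
  simpa [PathIn.vmem, (hp.nil_iff_eq.mpr rfl).eq_nil] using hu

section Fintype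

variable [Fintype V]

theorem sum_endCount : ∑ v, P.endCount v = 2 := by
  simp [endCount, Finset.sum_add_distrib]

theorem one_le_endCount_of_degree_eq_one (hu : G.degree u = 1) (h : P.vmem u) :
    1 ≤ P.endCount u := by
  have hle : (P.toSubgraph.neighborSet u).ncard ≤ 1 := by
    obtain ⟨w, hw⟩ := G.degree_pos_iff_exists_adj u |>.mp (by omega)
    calc _ ≤ (G.neighborSet u).ncard := Set.ncard_le_ncard (P.toSubgraph.neighborSet_subset u)
      _ = 1 := by rw [neighborSet_eq_singleton_of_degree_eq_one hu hw, Set.ncard_singleton]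
  have := ncard_neighborSet_add_endCount h
  omega

theorem neighborSet_of_degree_eq_one (hu : G.degree u = 1) (hwu : G.Adj w u) :
    P.toSubgraph.neighborSet u = if P.emem s(w, u) then {w} else ∅ := by
  have hsub : P.toSubgraph.neighborSet u ⊆ {w} :=
    neighborSet_eq_singleton_of_degree_eq_one hu hwu.symm ▸ P.toSubgraph.neighborSet_subset u
  split_ifs with h
  · exact hsub.antisymm (Set.singleton_subset_iff.mpr
      (toSubgraph_adj_iff.mpr (Sym2.eq_swap ▸ h)))
  · refine Set.subset_eq_empty (fun x hx => ?_) rfl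
    obtain rfl := hsub hx
    exact h (Sym2.eq_swap ▸ toSubgraph_adj_iff.mp hx)

theorem endCount_of_degree_eq_one (hu : G.degree u = 1) (hwu : G.Adj w u) (hw : P.vmem w) :
    P.endCount u = if P.emem s(w, u) then 1 else 0 := by
  have hN := neighborSet_of_degree_eq_one (P := P) hu hwu
  split_ifs at hN ⊢ with h
  · have := ncard_neighborSet_add_endCount (vmem_of_emem h (Sym2.mem_mk_right w u))
    rw [hN, Set.ncard_singleton] at this
    omega
  · by_cases hPu : P.vmem u
    · have := ncard_neighborSet_add_endCount hPu
      rw [hN, Set.ncard_empty] at this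
      exact absurd (eq_of_endCount_eq_two (by omega) hw) hwu.ne
    · exact endCount_eq_zero hPu

theorem endCount_eq_two_of_degree_eq_one (hu : G.degree u = 1) (hwu : G.Adj w u)
    (hw : ¬ P.vmem w) (h : P.vmem u) : P.endCount u = 2 := by
  have := ncard_neighborSet_add_endCount h
  rwa [neighborSet_of_degree_eq_one hu hwu,
    if_neg fun he => hw (vmem_of_emem he (Sym2.mem_mk_left w u)), Set.ncard_empty, zero_add]
    at this

variable (P) in
noncomputable def leafStarEndCount (w : V) : ℕ :=
  P.endCount w + ∑ u ∈ G.leafNeighborFinset w, P.endCount u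

theorem leafStarEndCount_add_ncard (hP : ∃ v ∈ insert w (G.leafNeighborFinset w), P.vmem v) :
    P.leafStarEndCount w + (P.toSubgraph.neighborSet w \ G.leafNeighborFinset w).ncard = 2 := by
  rw [Finset.exists_mem_insert] at hP
  by_cases hw : P.vmem w
  · have hsum : ∑ u ∈ G.leafNeighborFinset w, P.endCount u =
        (P.toSubgraph.neighborSet w ∩ G.leafNeighborFinset w).ncard := by
      rw [Finset.sum_congr rfl fun u hu => endCount_of_degree_eq_one
        (mem_leafNeighborFinset.mp hu).2 (mem_leafNeighborFinset.mp hu).1 hw,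
        Finset.sum_boole, Nat.cast_id, ← Set.ncard_coe_finset]
      congr 1
      ext x
      simp [toSubgraph_adj_iff, and_comm]
    have := Set.ncard_inter_add_ncard_sdiff_eq_ncard (P.toSubgraph.neighborSet w)
      (G.leafNeighborFinset w)
    have := ncard_neighborSet_add_endCount hw
    rw [leafStarEndCount, hsum]
    omega
  · obtain ⟨u₀, hu₀, hPu₀⟩ := hP.resolve_left hw
    have h2 := endCount_eq_two_of_degree_eq_one (mem_leafNeighborFinset.mp hu₀).2
      (mem_leafNeighborFinset.mp hu₀).1 hw hPu₀
    have hsum : ∑ u ∈ G.leafNeighborFinset w, P.endCount u = 2 := by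
      rw [Finset.sum_eq_single_of_mem u₀ hu₀ fun u _ hu => ?_, h2]
      by_cases hPu : P.vmem u
      · exact absurd (eq_of_endCount_eq_two h2 hPu) hu
      · exact endCount_eq_zero hPu
    simp [leafStarEndCount, hsum, endCount_eq_zero hw, neighborSet_eq_empty hw]

theorem neighborSet_sdiff_leafNeighborFinset_subset :
    P.toSubgraph.neighborSet w \ G.leafNeighborFinset w ⊆
      ↑(G.neighborFinset w \ G.leafNeighborFinset w) := fun x hx => by
  simpa using ⟨P.toSubgraph.neighborSet_subset w hx.1, hx.2⟩

theorem ncard_neighborSet_sdiff_leafNeighborFinset_le :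
    (P.toSubgraph.neighborSet w \ G.leafNeighborFinset w).ncard ≤
      (G.neighborFinset w \ G.leafNeighborFinset w).card := by
  rw [← Set.ncard_coe_finset]
  exact Set.ncard_le_ncard neighborSet_sdiff_leafNeighborFinset_subset

theorem ncard_neighborSet_sdiff_leafNeighborFinset_le_of_not_emem {x : V}
    (hx : ¬ P.emem s(w, x)) : (P.toSubgraph.neighborSet w \ G.leafNeighborFinset w).ncard ≤
      ((G.neighborFinset w \ G.leafNeighborFinset w).erase x).card := by
  rw [← Set.ncard_coe_finset, Finset.coe_erase]
  refine Set.ncard_le_ncard fun y hy => ⟨neighborSet_sdiff_leafNeighborFinset_subset hy, ?_⟩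
  rintro rfl
  exact hx (toSubgraph_adj_iff.mp hy.1)

end Fintype

end PathIn

/-- Separation makes the traces `{P ∈ R | s ∈ P}` of the elements `s ∈ T` distinct, and covering
makes them nonempty. -/
theorem card_lt_two_pow_of_separates_of_covers {G : SimpleGraph V} {S : Set (V ⊕ Sym2 V)}
    {F : Finset (PathIn G)} (hsep : Separates G S F) (hcov : Covers G S F)
    {T : Finset (V ⊕ Sym2 V)} (hTS : ↑T ⊆ S) {R : Finset (PathIn G)}
    (hR : ∀ s ∈ T, ∀ P ∈ F, ElemMem G s P → P ∈ R) : T.card < 2 ^ R.card := by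
  let σ : V ⊕ Sym2 V → Finset (PathIn G) := fun s => R.filter (ElemMem G s)
  have hinj : Set.InjOn σ T := by
    intro s hs t ht hst
    by_contra hne
    obtain ⟨P, hPF, ⟨hs', ht'⟩ | ⟨hs', ht'⟩⟩ := hsep s (hTS hs) t (hTS ht) hne
    · have : P ∈ σ t := hst ▸ Finset.mem_filter.mpr ⟨hR s hs P hPF hs', hs'⟩
      exact ht' (Finset.mem_filter.mp this).2
    · have : P ∈ σ s := hst ▸ Finset.mem_filter.mpr ⟨hR t ht P hPF ht', ht'⟩
      exact hs' (Finset.mem_filter.mp this).2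
  have himage : T.image σ ⊆ R.powerset.erase ∅ := by
    simp only [Finset.subset_iff, Finset.mem_image, Finset.mem_erase, Finset.mem_powerset]
    rintro _ ⟨s, hs, rfl⟩
    obtain ⟨P, hPF, hP⟩ := hcov s (hTS hs)
    exact ⟨Finset.ne_empty_of_mem (Finset.mem_filter.mpr ⟨hR s hs P hPF hP, hP⟩),
      Finset.filter_subset _ _⟩
  calc T.card = (T.image σ).card := (Finset.card_image_of_injOn hinj).symm
    _ ≤ (R.powerset.erase ∅).card := Finset.card_le_card himage
    _ < 2 ^ R.card := by
      rw [Finset.card_erase_of_mem (Finset.empty_mem_powerset R), Finset.card_powerset]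
      exact Nat.sub_lt (Nat.two_pow_pos _) one_pos

def vertexAndInteriorEdgeSet (G : SimpleGraph V) [Fintype V] : Set (V ⊕ Sym2 V) :=
  (Sum.inl '' Set.univ) ∪ (Sum.inr '' interiorEdgeSet G)

section VertexAndInteriorEdgeSet

variable {G : SimpleGraph V} [Fintype V] {F : Finset (PathIn G)} {w x : V}

theorem inl_mem_vertexAndInteriorEdgeSet (v : V) : Sum.inl v ∈ vertexAndInteriorEdgeSet G :=
  Or.inl ⟨v, trivial, rfl⟩

theorem inr_mem_vertexAndInteriorEdgeSet (h : G.Adj w x) (hw : G.degree w ≠ 1)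
    (hx : G.degree x ≠ 1) : Sum.inr s(w, x) ∈ vertexAndInteriorEdgeSet G := by
  refine Or.inr ⟨s(w, x), ⟨h, fun z hz => ?_⟩, rfl⟩
  rcases Sym2.mem_iff.mp hz with rfl | rfl <;> assumption

theorem exists_vmem_of_covers (hcov : Covers G (vertexAndInteriorEdgeSet G) F) (v : V) :
    ∃ P ∈ F, P.vmem v :=
  hcov _ (inl_mem_vertexAndInteriorEdgeSet v)

theorem exists_vmem_not_emem_of_separates (hsep : Separates G (vertexAndInteriorEdgeSet G) F)
    (h : G.Adj w x) (hw : G.degree w ≠ 1) (hx : G.degree x ≠ 1) :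
    ∃ P ∈ F, P.vmem w ∧ ¬ P.emem s(w, x) := by
  obtain ⟨P, hPF, hP | ⟨hPw, hP⟩⟩ := hsep _ (inl_mem_vertexAndInteriorEdgeSet w) _
    (inr_mem_vertexAndInteriorEdgeSet h hw hx) Sum.inl_ne_inr
  · exact ⟨P, hPF, hP⟩
  · exact absurd (PathIn.vmem_of_emem hP (Sym2.mem_mk_left w x)) hPw

end VertexAndInteriorEdgeSet
section LeafStar

variable {G : SimpleGraph V} [Fintype V] {F : Finset (PathIn G)} {w : V}

/-- Each neighbour `x` of `w` contributes the element `x` if it is a leaf and the interior edge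
`wx` otherwise; together with `w` these are four elements seen only by paths meeting `w` or a leaf
next to it, so at least three such paths are needed to separate them. -/
theorem three_le_card_filter_meets (hsep : Separates G (vertexAndInteriorEdgeSet G) F)
    (hcov : Covers G (vertexAndInteriorEdgeSet G) F) (hw : G.degree w = 3) :
    3 ≤ (F.filter fun P => ∃ v ∈ insert w (G.leafNeighborFinset w), P.vmem v).card := by
  let e : V → V ⊕ Sym2 V := fun x => if G.degree x = 1 then Sum.inl x else Sum.inr s(w, x)
  have he : Set.InjOn e (G.neighborFinset w) := by
    intro x _ y _ hxy
    simp only [e] at hxy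
    split_ifs at hxy
    · exact Sum.inl_injective hxy
    · exact Sym2.congr_right.mp (Sum.inr_injective hxy)
  have hw' : Sum.inl w ∉ (G.neighborFinset w).image e := by
    simp only [Finset.mem_image, mem_neighborFinset, e]
    rintro ⟨x, hx, hex⟩
    split_ifs at hex
    exact G.loopless.irrefl w (Sum.inl_injective hex ▸ hx)
  have hT : (insert (Sum.inl w) ((G.neighborFinset w).image e)).card = 4 := by
    rw [Finset.card_insert_of_notMem hw', Finset.card_image_of_injOn he,
      card_neighborFinset_eq_degree, hw]
  have := card_lt_two_pow_of_separates_of_covers hsep hcov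
    (T := insert (Sum.inl w) ((G.neighborFinset w).image e))
    (R := F.filter fun P => ∃ v ∈ insert w (G.leafNeighborFinset w), P.vmem v) ?_ ?_
  · rw [hT] at this
    by_contra! h
    interval_cases (F.filter fun P => ∃ v ∈ insert w (G.leafNeighborFinset w), P.vmem v).card
      <;> omega
  · intro s hs
    simp only [Finset.coe_insert, Finset.coe_image, Set.mem_insert_iff, Set.mem_image,
      Finset.mem_coe, mem_neighborFinset] at hs
    obtain rfl | ⟨x, hx, rfl⟩ := hs
    · exact inl_mem_vertexAndInteriorEdgeSet w
    · simp only [e]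
      split_ifs with h
      · exact inl_mem_vertexAndInteriorEdgeSet x
      · exact inr_mem_vertexAndInteriorEdgeSet hx (by omega) h
  · intro s hs P hPF hP
    refine Finset.mem_filter.mpr ⟨hPF, ?_⟩
    simp only [Finset.mem_insert, Finset.mem_image, mem_neighborFinset] at hs
    obtain rfl | ⟨x, hx, rfl⟩ := hs
    · exact ⟨w, Finset.mem_insert_self _ _, hP⟩
    · simp only [e] at hP
      split_ifs at hP with h
      · exact ⟨x, Finset.mem_insert_of_mem (by simp [SimpleGraph.leafNeighborFinset, hx, h]), hP⟩
      · exact ⟨w, Finset.mem_insert_self _ _, PathIn.vmem_of_emem hP (Sym2.mem_mk_left w x)⟩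

theorem two_le_sum_leafStarEndCount (hsep : Separates G (vertexAndInteriorEdgeSet G) F)
    (hcov : Covers G (vertexAndInteriorEdgeSet G) F) (hw : G.degree w = 3)
    (hU : (G.leafNeighborFinset w).card = 1) : 2 ≤ ∑ P ∈ F, P.leafStarEndCount w := by
  obtain ⟨u, hu⟩ := Finset.card_eq_one.mp hU
  have huU : u ∈ G.leafNeighborFinset w := hu ▸ Finset.mem_singleton_self u
  obtain ⟨P, hPF, hPu⟩ := exists_vmem_of_covers hcov u
  have hP := P.leafStarEndCount_add_ncard ⟨u, Finset.mem_insert_of_mem huU, hPu⟩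
  have hP1 : 1 ≤ P.leafStarEndCount w := by
    have := P.one_le_endCount_of_degree_eq_one (mem_leafNeighborFinset.mp huU).2 hPu
    rw [PathIn.leafStarEndCount, hu, Finset.sum_singleton]
    omega
  have hPsum : P.leafStarEndCount w ≤ ∑ P ∈ F, P.leafStarEndCount w :=
    Finset.single_le_sum (f := (·.leafStarEndCount w)) (fun _ _ => Nat.zero_le _) hPF
  by_cases hP2 : 2 ≤ P.leafStarEndCount w
  · exact hP2.trans hPsum
  -- `P` leaves `w` along an interior edge `wx`, which some other path through `w` avoids.
  obtain ⟨x, hx⟩ := Set.ncard_eq_one.mp (show (P.toSubgraph.neighborSet w \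
    G.leafNeighborFinset w).ncard = 1 by omega)
  have hxP : x ∈ P.toSubgraph.neighborSet w \ G.leafNeighborFinset w := hx ▸ rfl
  have hxw : G.Adj w x := P.toSubgraph.adj_sub hxP.1
  have hxX : x ∈ G.neighborFinset w \ G.leafNeighborFinset w := by
    simpa using ⟨hxw, hxP.2⟩
  have hx1 : G.degree x ≠ 1 := fun h => hxP.2 (mem_leafNeighborFinset.mpr ⟨hxw, h⟩)
  obtain ⟨Q, hQF, hQw, hQx⟩ := exists_vmem_not_emem_of_separates hsep hxw (by omega) hx1
  have hQP : P ≠ Q := by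
    rintro rfl
    exact hQx (PathIn.toSubgraph_adj_iff.mp hxP.1)
  have hQ1 : 1 ≤ Q.leafStarEndCount w := by
    have := Q.leafStarEndCount_add_ncard ⟨w, Finset.mem_insert_self _ _, hQw⟩
    have := PathIn.ncard_neighborSet_sdiff_leafNeighborFinset_le_of_not_emem hQx
    have := card_sdiff_leafNeighborFinset_add hw
    rw [Finset.card_erase_of_mem hxX] at *
    omega
  calc 2 ≤ P.leafStarEndCount w + Q.leafStarEndCount w := by omega
    _ = ∑ R ∈ {P, Q}, R.leafStarEndCount w :=
      (Finset.sum_pair (f := (·.leafStarEndCount w)) hQP).symm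
    _ ≤ ∑ P ∈ F, P.leafStarEndCount w :=
      Finset.sum_le_sum_of_subset (Finset.insert_subset hPF (Finset.singleton_subset_iff.mpr hQF))

theorem four_le_sum_leafStarEndCount (hsep : Separates G (vertexAndInteriorEdgeSet G) F)
    (hcov : Covers G (vertexAndInteriorEdgeSet G) F) (hw : G.degree w = 3)
    (hU : (G.leafNeighborFinset w).card = 2) : 4 ≤ ∑ P ∈ F, P.leafStarEndCount w := by
  have hX := card_sdiff_leafNeighborFinset_add hw
  obtain ⟨x, hx⟩ := Finset.card_eq_one.mp (show (G.neighborFinset w \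
    G.leafNeighborFinset w).card = 1 by omega)
  have hxX : x ∈ G.neighborFinset w \ G.leafNeighborFinset w := hx ▸ Finset.mem_singleton_self x
  have hxw : G.Adj w x := by simpa using (Finset.mem_sdiff.mp hxX).1
  have hx1 : G.degree x ≠ 1 := fun h =>
    (Finset.mem_sdiff.mp hxX).2 (mem_leafNeighborFinset.mpr ⟨hxw, h⟩)
  set R := F.filter (fun P => ∃ v ∈ insert w (G.leafNeighborFinset w), P.vmem v)
  have hR1 : ∀ P ∈ R, 1 ≤ P.leafStarEndCount w := fun P hP => by
    have := P.leafStarEndCount_add_ncard (Finset.mem_filter.mp hP).2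
    have := P.ncard_neighborSet_sdiff_leafNeighborFinset_le (w := w)
    omega
  obtain ⟨Q, hQF, hQw, hQx⟩ := exists_vmem_not_emem_of_separates hsep hxw (by omega) hx1
  have hQR : Q ∈ R := Finset.mem_filter.mpr ⟨hQF, w, Finset.mem_insert_self _ _, hQw⟩
  have hQ2 : 2 ≤ Q.leafStarEndCount w := by
    have := Q.leafStarEndCount_add_ncard (Finset.mem_filter.mp hQR).2
    have := PathIn.ncard_neighborSet_sdiff_leafNeighborFinset_le_of_not_emem hQx
    rw [hx, Finset.erase_singleton, Finset.card_empty] at this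
    omega
  have hR : 3 ≤ R.card := three_le_card_filter_meets hsep hcov hw
  calc 4 ≤ 2 + (R.erase Q).card := by rw [Finset.card_erase_of_mem hQR]; omega
    _ ≤ Q.leafStarEndCount w + ∑ P ∈ R.erase Q, P.leafStarEndCount w := by
      gcongr
      simpa using Finset.card_nsmul_le_sum _ _ 1 fun P hP => hR1 P (Finset.mem_of_mem_erase hP)
    _ = ∑ P ∈ R, P.leafStarEndCount w := Finset.add_sum_erase R (·.leafStarEndCount w) hQR
    _ ≤ ∑ P ∈ F, P.leafStarEndCount w := Finset.sum_le_sum_of_subset (Finset.filter_subset _ _)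

theorem six_le_sum_leafStarEndCount (hsep : Separates G (vertexAndInteriorEdgeSet G) F)
    (hcov : Covers G (vertexAndInteriorEdgeSet G) F) (hw : G.degree w = 3)
    (hU : (G.leafNeighborFinset w).card = 3) : 6 ≤ ∑ P ∈ F, P.leafStarEndCount w := by
  have hX := card_sdiff_leafNeighborFinset_add hw
  set R := F.filter (fun P => ∃ v ∈ insert w (G.leafNeighborFinset w), P.vmem v)
  have hR2 : ∀ P ∈ R, P.leafStarEndCount w = 2 := fun P hP => by
    have := P.leafStarEndCount_add_ncard (Finset.mem_filter.mp hP).2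
    have := P.ncard_neighborSet_sdiff_leafNeighborFinset_le (w := w)
    omega
  have hR : 3 ≤ R.card := three_le_card_filter_meets hsep hcov hw
  calc 6 ≤ R.card * 2 := by omega
    _ = ∑ P ∈ R, P.leafStarEndCount w := by rw [Finset.sum_congr rfl hR2, Finset.sum_const,
      smul_eq_mul]
    _ ≤ ∑ P ∈ F, P.leafStarEndCount w := Finset.sum_le_sum_of_subset (Finset.filter_subset _ _)

theorem two_mul_card_leafNeighborFinset_le (hsep : Separates G (vertexAndInteriorEdgeSet G) F)
    (hcov : Covers G (vertexAndInteriorEdgeSet G) F) (hw : G.degree w = 3) :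
    2 * (G.leafNeighborFinset w).card ≤ ∑ P ∈ F, P.leafStarEndCount w := by
  have : (G.leafNeighborFinset w).card ≤ 3 := by
    have := card_sdiff_leafNeighborFinset_add hw
    omega
  interval_cases hU : (G.leafNeighborFinset w).card
  · simp
  · exact two_le_sum_leafStarEndCount hsep hcov hw hU
  · exact four_le_sum_leafStarEndCount hsep hcov hw hU
  · exact six_le_sum_leafStarEndCount hsep hcov hw hU

end LeafStar

theorem leafCount_eq_card_filter {G : SimpleGraph V} [Fintype V] :
    leafCount G = (Finset.univ.filter (G.degree · = 1)).card := by
  rw [leafCount, Nat.card_coe_set_eq, Set.ncard_eq_toFinset_card', Set.toFinset_ofPred]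

theorem sum_sum_leafStarEndCount_le {G : SimpleGraph V} [Fintype V]
    (hleaf : ∀ u w, G.degree u = 1 → G.Adj u w → G.degree w = 3) (F : Finset (PathIn G)) :
    ∑ w ∈ Finset.univ.filter (G.degree · = 3), ∑ P ∈ F, P.leafStarEndCount w ≤
      ∑ v, ∑ P ∈ F, P.endCount v := by
  have hdisj : Disjoint (Finset.univ.filter (G.degree · = 3))
      (Finset.univ.filter (G.degree · = 1)) :=
    Finset.disjoint_filter.mpr fun _ _ h3 h1 => by omega
  simp only [PathIn.leafStarEndCount, Finset.sum_add_distrib]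
  rw [Finset.sum_congr rfl fun w _ => Finset.sum_comm, sum_sum_leafNeighborFinset hleaf,
    ← Finset.sum_union hdisj]
  exact Finset.sum_le_sum_of_subset (Finset.subset_univ _)

theorem stmt9 [Fintype V] (G : SimpleGraph V) (hT : G.IsTree)
    (hcard : 4 ≤ Fintype.card V)
    (hdeg : ∀ v : V, G.degree v = 1 ∨ G.degree v = 3)
    (F : Set (PathIn G)) (hF : F.Finite)
    (hsep : Separates G ((Sum.inl '' Set.univ) ∪ (Sum.inr '' interiorEdgeSet G)) F)
    (hcov : Covers G ((Sum.inl '' Set.univ) ∪ (Sum.inr '' interiorEdgeSet G)) F) :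
    leafCount G ≤ F.ncard := by
  lift F to Finset (PathIn G) using hF
  have hleaf : ∀ u w, G.degree u = 1 → G.Adj u w → G.degree w = 3 := fun u w hu h =>
    (hdeg w).resolve_left (hT.connected.degree_ne_one_of_adj_of_degree_eq_one (by omega) hu h)
  suffices 2 * leafCount G ≤ 2 * F.card by rw [Set.ncard_coe_finset]; omega
  calc 2 * leafCount G
      = ∑ w ∈ Finset.univ.filter (G.degree · = 3), 2 * (G.leafNeighborFinset w).card := by
        rw [leafCount_eq_card_filter, ← Finset.mul_sum]
        simp only [Finset.card_eq_sum_ones, sum_sum_leafNeighborFinset hleaf (fun _ => 1)]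
    _ ≤ ∑ w ∈ Finset.univ.filter (G.degree · = 3), ∑ P ∈ F, P.leafStarEndCount w :=
        Finset.sum_le_sum fun w hw =>
          two_mul_card_leafNeighborFinset_le hsep hcov (Finset.mem_filter.mp hw).2
    _ ≤ ∑ v, ∑ P ∈ F, P.endCount v := sum_sum_leafStarEndCount_le hleaf F
    _ = 2 * F.card := by simp [Finset.sum_comm (s := Finset.univ), PathIn.sum_endCount, mul_comm]
end

section
/- Let T be a tree, u a leaf of T whose unique neighbor w has degree at least 4, and v a vertex of degree 2 in T with neighbors v₁ and v₂. Let T' be the tree obtained from T by deleting u and v and adding the edge v₁v₂. Then h₁(T') = h₁(T) − 1, h₂(T') = h₂(T) − 1, and the minimum size of an edge-separating-covering path system of T is at most one more than that of T'. -/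
open SimpleGraph
open scoped Classical

universe u

variable {V : Type u}

/-- The tree obtained from `G` by deleting the leaf `u` and the degree-two
vertex `v`, and adding the edge `v₁v₂` between the former neighbors of `v`. -/
def reducedGraph (G : SimpleGraph V) (u v v₁ v₂ : V) :
    SimpleGraph {x : V // x ≠ u ∧ x ≠ v} :=
  SimpleGraph.fromRel (fun a b => G.Adj a.1 b.1 ∨ (a.1 = v₁ ∧ b.1 = v₂))

/-!
Deleting the leaf `u` lowers the degree of `w` from at least `4` to at least `3`, and suppressing
`v` changes no other degree, which gives the two counts. A path of `T'` lifts to a path of `T` by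
replacing the edge `v₁v₂` with `v₁ v v₂`. Lifting a separating covering family of `T'` gives a
family of `T` that covers and separates all edges except that it misses `uw` and cannot tell `vv₁`
from `vv₂`; the path from `u` to `v` contains `uw` and exactly one of `vv₁`, `vv₂`, so adding it
repairs both defects.
-/

namespace SimpleGraph

variable {G : SimpleGraph V}

lemma IsAcyclic.not_adj_of_adj_of_adj (hG : G.IsAcyclic) {v v₁ v₂ : V}
    (hv1 : G.Adj v v₁) (hv2 : G.Adj v v₂) : ¬ G.Adj v₁ v₂ := fun h12 =>
  hG.cliqueFree le_rfl {v, v₁, v₂} (is3Clique_triple_iff.2 ⟨hv1, hv2, h12⟩)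

lemma adj_iff_of_degree_eq_one {u w : V} [Fintype (G.neighborSet u)] (hu : G.degree u = 1)
    (huw : G.Adj u w) {x : V} : G.Adj u x ↔ x = w := by
  obtain ⟨y, -, hy⟩ := degree_eq_one_iff_existsUnique_adj.1 hu
  exact ⟨fun hx => (hy x hx).trans (hy w huw).symm, fun hx => hx ▸ huw⟩

lemma eq_of_mem_edgeSet_of_degree_eq_one {u w : V} [Fintype (G.neighborSet u)]
    (hu : G.degree u = 1) (huw : G.Adj u w) {e : Sym2 V} (he : e ∈ G.edgeSet) (hue : u ∈ e) :
    e = s(u, w) := by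
  rw [← Sym2.other_spec hue] at he ⊢
  rw [(adj_iff_of_degree_eq_one hu huw).1 (G.mem_edgeSet.1 he)]

lemma adj_iff_of_degree_eq_two {v v₁ v₂ : V} [Fintype (G.neighborSet v)] (hv : G.degree v = 2)
    (hv1 : G.Adj v v₁) (hv2 : G.Adj v v₂) (h12 : v₁ ≠ v₂) {x : V} :
    G.Adj v x ↔ x = v₁ ∨ x = v₂ := by
  have hN : G.neighborFinset v = {v₁, v₂} :=
    (Finset.eq_of_subset_of_card_le (by simp [Finset.insert_subset_iff, hv1, hv2])
      (by rw [card_neighborFinset_eq_degree, hv, Finset.card_pair h12])).symm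
  rw [← mem_neighborFinset, hN, Finset.mem_insert, Finset.mem_singleton]

end SimpleGraph

lemma SimpleGraph.Walk.IsPath.mk_end_mem_edges_iff {G : SimpleGraph V} {a b x : V}
    {p : G.Walk a b} (hp : p.IsPath) (hnil : ¬ p.Nil) :
    s(b, x) ∈ p.edges ↔ x = p.penultimate :=
  ⟨hp.eq_penultimate_of_mem_edges, fun h => h ▸ Sym2.eq_swap ▸ p.mk_penultimate_end_mem_edges hnil⟩

lemma Set.ncard_sdiff_pair_of_mem_of_notMem [Finite V] {s : Set V} {a b : V} (ha : a ∈ s)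
    (hb : b ∉ s) : (s \ {a, b}).ncard = s.ncard - 1 := by
  have : s \ {a, b} = s \ {a} := by
    ext x
    simp only [Set.mem_sdiff, Set.mem_insert_iff, Set.mem_singleton_iff]
    grind
  rw [this, Set.ncard_sdiff_singleton_of_mem ha]

lemma Nat.card_setOf_subtype_ne_ne {u v : V} (p : V → Prop) :
    Nat.card {x : {x : V // x ≠ u ∧ x ≠ v} | p x.1} = ({x | p x} \ {u, v}).ncard := by
  rw [← Nat.card_coe_set_eq]
  refine Nat.card_congr ((Equiv.subtypeSubtypeEquivSubtypeInter _ p).trans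
    (Equiv.subtypeEquivRight fun x => ?_))
  simp only [Set.mem_sdiff, Set.mem_ofPred_eq, Set.mem_insert_iff, Set.mem_singleton_iff]
  tauto

lemma edgeSep_iff {G : SimpleGraph V} {F : Set (PathIn G)} :
    EdgeSep G F ↔ ∀ e ∈ G.edgeSet, ∀ f ∈ G.edgeSet, e ≠ f →
      ∃ P ∈ F, ¬ (PathIn.emem e P ↔ PathIn.emem f P) := by
  unfold EdgeSep
  refine forall₂_congr fun e _ => forall₂_congr fun f _ => imp_congr_right fun _ =>
    exists_congr fun P => and_congr_right fun _ => ?_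
  tauto

section Reduced

variable {G : SimpleGraph V} {u v v₁ v₂ : V}

lemma reducedGraph_adj (h12 : v₁ ≠ v₂) {a b : {x : V // x ≠ u ∧ x ≠ v}} :
    (reducedGraph G u v v₁ v₂).Adj a b ↔ G.Adj a.1 b.1 ∨ s(a.1, b.1) = s(v₁, v₂) := by
  rw [reducedGraph, fromRel_adj, Sym2.eq_iff, ← Subtype.coe_ne_coe]
  constructor
  · rintro ⟨-, (h | h) | (h | h)⟩ <;> tauto
  · rintro (h | (⟨rfl, rfl⟩ | ⟨rfl, rfl⟩))
    · exact ⟨h.ne, Or.inl (Or.inl h)⟩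
    · exact ⟨h12, by tauto⟩
    · exact ⟨h12.symm, by tauto⟩

lemma adj_of_reducedGraph_adj {a c : {x : V // x ≠ u ∧ x ≠ v}}
    (h : (reducedGraph G u v v₁ v₂).Adj a c) (hs : s(a.1, c.1) ≠ s(v₁, v₂)) : G.Adj a.1 c.1 := by
  rw [reducedGraph, fromRel_adj] at h
  rw [Ne, Sym2.eq_iff] at hs
  obtain ⟨-, (h | h) | (h | h)⟩ := h
  · exact h
  · exact absurd (Or.inl h) hs
  · exact h.symm
  · exact absurd (Or.inr h.symm) hs

end Reduced

section Degree

variable [Fintype V] {G : SimpleGraph V} {u w v v₁ v₂ : V}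

lemma mem_map_neighborFinset_reducedGraph (h12 : v₁ ≠ v₂)
    (x : {x : V // x ≠ u ∧ x ≠ v}) (z : V) :
    z ∈ ((reducedGraph G u v v₁ v₂).neighborFinset x).map (Function.Embedding.subtype _) ↔
      z ≠ u ∧ z ≠ v ∧ (G.Adj x.1 z ∨ s(x.1, z) = s(v₁, v₂)) := by
  simp only [Finset.mem_map, mem_neighborFinset, reducedGraph_adj h12,
    Function.Embedding.coe_subtype]
  constructor
  · rintro ⟨z, hz, rfl⟩
    exact ⟨z.2.1, z.2.2, hz⟩
  · rintro ⟨hzu, hzv, hz⟩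
    exact ⟨⟨z, hzu, hzv⟩, hz, rfl⟩

lemma degree_reducedGraph (hv : G.degree v = 2) (hv1 : G.Adj v v₁) (hv2 : G.Adj v v₂)
    (h12 : v₁ ≠ v₂) (hna : ¬ G.Adj v₁ v₂) (hu1 : v₁ ≠ u) (hu2 : v₂ ≠ u) (huv : u ≠ v)
    (x : {x : V // x ≠ u ∧ x ≠ v}) :
    (reducedGraph G u v v₁ v₂).degree x = ((G.neighborFinset x.1).erase u).card := by
  have hN := fun y => adj_iff_of_degree_eq_two (x := y) hv hv1 hv2 h12
  rw [← card_neighborFinset_eq_degree, ← Finset.card_map (Function.Embedding.subtype _)]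
  by_cases hx : x.1 = v₁ ∨ x.1 = v₂
  · obtain ⟨y, hxy, hyu, hyv, hxy'⟩ :
        ∃ y, s(x.1, y) = s(v₁, v₂) ∧ y ≠ u ∧ y ≠ v ∧ ¬ G.Adj x.1 y := by
      rcases hx with hx | hx <;> rw [hx]
      · exact ⟨v₂, rfl, hu2, hv2.ne', hna⟩
      · exact ⟨v₁, Sym2.eq_swap, hu1, hv1.ne', fun h => hna h.symm⟩
    have hvx : v ∈ (G.neighborFinset x.1).erase u :=
      Finset.mem_erase.2 ⟨huv.symm, (mem_neighborFinset _ _ _).2 ((hN _).2 hx).symm⟩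
    have hmap : ((reducedGraph G u v v₁ v₂).neighborFinset x).map (Function.Embedding.subtype _) =
        insert y (((G.neighborFinset x.1).erase u).erase v) := by
      ext z
      rw [mem_map_neighborFinset_reducedGraph h12, ← hxy, Sym2.congr_right]
      simp only [Finset.mem_insert, Finset.mem_erase, mem_neighborFinset]
      grind
    rw [hmap, Finset.card_insert_of_notMem (by simp [hxy']), Finset.card_erase_add_one hvx]
  · have hxv : ¬ G.Adj x.1 v := fun h => hx ((hN _).1 h.symm)
    congr 1
    ext z
    rw [mem_map_neighborFinset_reducedGraph h12]
    simp only [Finset.mem_erase, mem_neighborFinset, Sym2.eq_iff]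
    grind

lemma degree_reducedGraph_eq_iff (hu : G.degree u = 1) (huw : G.Adj u w)
    (hv : G.degree v = 2) (hv1 : G.Adj v v₁) (hv2 : G.Adj v v₂)
    (h12 : v₁ ≠ v₂) (hna : ¬ G.Adj v₁ v₂) (hu1 : v₁ ≠ u) (hu2 : v₂ ≠ u) (huv : u ≠ v)
    {k : ℕ} (hk : k + 2 ≤ G.degree w) (x : {x : V // x ≠ u ∧ x ≠ v}) :
    (reducedGraph G u v v₁ v₂).degree x = k ↔ G.degree x.1 = k := by
  rw [degree_reducedGraph hv hv1 hv2 h12 hna hu1 hu2 huv]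
  by_cases hxw : x.1 = w
  · rw [Finset.card_erase_of_mem ((mem_neighborFinset _ _ _).2 (hxw ▸ huw.symm)),
      card_neighborFinset_eq_degree, hxw]
    omega
  · rw [Finset.erase_eq_of_notMem fun h =>
      hxw ((adj_iff_of_degree_eq_one hu huw).1 ((mem_neighborFinset _ _ _).1 h).symm),
      card_neighborFinset_eq_degree]

lemma card_degree_reducedGraph (hu : G.degree u = 1) (huw : G.Adj u w)
    (hv : G.degree v = 2) (hv1 : G.Adj v v₁) (hv2 : G.Adj v v₂)
    (h12 : v₁ ≠ v₂) (hna : ¬ G.Adj v₁ v₂) (hu1 : v₁ ≠ u) (hu2 : v₂ ≠ u) (huv : u ≠ v)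
    {k : ℕ} (hk : k + 2 ≤ G.degree w) :
    Nat.card {x | (reducedGraph G u v v₁ v₂).degree x = k} =
      ({x | G.degree x = k} \ {u, v}).ncard := by
  simp only [degree_reducedGraph_eq_iff hu huw hv hv1 hv2 h12 hna hu1 hu2 huv hk]
  exact Nat.card_setOf_subtype_ne_ne fun y => G.degree y = k

end Degree

section Lift

variable {G : SimpleGraph V} {u v v₁ v₂ : V}

def liftEdge (v v₁ v₂ : V) (e : Sym2 {x : V // x ≠ u ∧ x ≠ v}) : Set (Sym2 V) :=
  if e.map Subtype.val = s(v₁, v₂) then {s(v, v₁), s(v, v₂)} else {e.map Subtype.val}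

lemma adj_and_adj_of_sym2_eq (hv1 : G.Adj v v₁) (hv2 : G.Adj v v₂) {a c : V}
    (hs : s(a, c) = s(v₁, v₂)) : G.Adj a v ∧ G.Adj v c := by
  rcases Sym2.eq_iff.1 hs with ⟨rfl, rfl⟩ | ⟨rfl, rfl⟩
  exacts [⟨hv1.symm, hv2⟩, ⟨hv2.symm, hv1⟩]

noncomputable def liftAdj (hv1 : G.Adj v v₁) (hv2 : G.Adj v v₂) {a c : {x : V // x ≠ u ∧ x ≠ v}}
    (h : (reducedGraph G u v v₁ v₂).Adj a c) : G.Walk a.1 c.1 :=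
  if hs : s(a.1, c.1) = s(v₁, v₂) then
    .cons (adj_and_adj_of_sym2_eq hv1 hv2 hs).1 (adj_and_adj_of_sym2_eq hv1 hv2 hs).2.toWalk
  else (adj_of_reducedGraph_adj h hs).toWalk

noncomputable def liftWalk (hv1 : G.Adj v v₁) (hv2 : G.Adj v v₂) {a b : {x : V // x ≠ u ∧ x ≠ v}} :
    (reducedGraph G u v v₁ v₂).Walk a b → G.Walk a.1 b.1
  | .nil => .nil
  | .cons h p => (liftAdj hv1 hv2 h).append (liftWalk hv1 hv2 p)

variable (hv1 : G.Adj v v₁) (hv2 : G.Adj v v₂)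

lemma mem_edges_liftAdj {a c : {x : V // x ≠ u ∧ x ≠ v}} (h : (reducedGraph G u v v₁ v₂).Adj a c)
    (e : Sym2 V) : e ∈ (liftAdj hv1 hv2 h).edges ↔ e ∈ liftEdge v v₁ v₂ s(a, c) := by
  unfold liftAdj liftEdge
  rw [Sym2.map_mk]
  split_ifs with hs
  · rcases Sym2.eq_iff.1 hs with ⟨ha, hc⟩ | ⟨ha, hc⟩ <;>
      simp [ha, hc, Sym2.eq_swap, or_comm]
  · simp

lemma mem_edges_liftWalk {a b : {x : V // x ≠ u ∧ x ≠ v}}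
    (p : (reducedGraph G u v v₁ v₂).Walk a b) (e : Sym2 V) :
    e ∈ (liftWalk hv1 hv2 p).edges ↔ ∃ e' ∈ p.edges, e ∈ liftEdge v v₁ v₂ e' := by
  induction p with
  | nil => simp [liftWalk]
  | cons h p ih => simp [liftWalk, Walk.edges_append, mem_edges_liftAdj, ih]

lemma notMem_map_val (e : Sym2 {x : V // x ≠ u ∧ x ≠ v}) :
    u ∉ e.map Subtype.val ∧ v ∉ e.map Subtype.val := by
  constructor <;> intro hx <;> obtain ⟨x, -, hx⟩ := Sym2.mem_map.1 hx
  exacts [x.2.1 hx, x.2.2 hx]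

lemma eq_of_mem_liftEdge {e : Sym2 V} {e' f' : Sym2 {x : V // x ≠ u ∧ x ≠ v}}
    (he : e ∈ liftEdge v v₁ v₂ e') (hf : e ∈ liftEdge v v₁ v₂ f') : e' = f' := by
  have hv : e ∈ ({s(v, v₁), s(v, v₂)} : Set (Sym2 V)) → v ∈ e := by
    rintro (rfl | rfl) <;> exact Sym2.mem_mk_left _ _
  unfold liftEdge at he hf
  apply Sym2.map.injective Subtype.val_injective
  split_ifs at he hf with h1 h2 h2
  · rw [h1, h2]
  · exact absurd (hf ▸ hv he) (notMem_map_val f').2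
  · exact absurd (he ▸ hv hf) (notMem_map_val e').2
  · exact he.symm.trans hf

lemma eq_or_eq_of_mem_liftEdge {e f : Sym2 V} {e' : Sym2 {x : V // x ≠ u ∧ x ≠ v}}
    (he : e ∈ liftEdge v v₁ v₂ e') (hf : f ∈ liftEdge v v₁ v₂ e') (hef : e ≠ f) :
    (e = s(v, v₁) ∧ f = s(v, v₂)) ∨ (e = s(v, v₂) ∧ f = s(v, v₁)) := by
  unfold liftEdge at he hf
  split_ifs at he hf
  · simp only [Set.mem_insert_iff, Set.mem_singleton_iff] at he hf
    grind
  · exact absurd (he.trans hf.symm) hef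

lemma notMem_of_mem_liftEdge (hu1 : v₁ ≠ u) (hu2 : v₂ ≠ u) (huv : u ≠ v) {e : Sym2 V}
    {e' : Sym2 {x : V // x ≠ u ∧ x ≠ v}} (he : e ∈ liftEdge v v₁ v₂ e') : u ∉ e := by
  unfold liftEdge at he
  split_ifs at he
  · rcases he with rfl | rfl <;> simp [huv, hu1.symm, hu2.symm]
  · exact he ▸ (notMem_map_val e').1

lemma isTrail_liftWalk {a b : {x : V // x ≠ u ∧ x ≠ v}}
    {p : (reducedGraph G u v v₁ v₂).Walk a b} (hp : p.IsPath) : (liftWalk hv1 hv2 p).IsTrail := by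
  induction p with
  | nil => simp [liftWalk]
  | @cons a c b h p ih =>
    rw [Walk.cons_isPath_iff] at hp
    rw [liftWalk, Walk.isTrail_append]
    refine ⟨?_, ih hp.1, fun e he he' => ?_⟩
    · unfold liftAdj
      split_ifs <;> simp [Walk.isTrail_def, Subtype.coe_ne_coe.2 h.ne, a.2.2]
    · obtain ⟨f', hf', hef'⟩ := (mem_edges_liftWalk hv1 hv2 p e).1 he'
      rw [mem_edges_liftAdj] at he
      exact hp.2 (p.fst_mem_support_of_mem_edges (eq_of_mem_liftEdge he hef' ▸ hf'))

lemma isPath_liftWalk (hG : G.IsAcyclic) {a b : {x : V // x ≠ u ∧ x ≠ v}}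
    {p : (reducedGraph G u v v₁ v₂).Walk a b} (hp : p.IsPath) : (liftWalk hv1 hv2 p).IsPath :=
  (hG.isPath_iff_isTrail _).2 (isTrail_liftWalk hv1 hv2 hp)

end Lift

section Separation

variable {G : SimpleGraph V} {u w v v₁ v₂ : V}

noncomputable def liftPath (hG : G.IsAcyclic) (hv1 : G.Adj v v₁) (hv2 : G.Adj v v₂)
    (P : PathIn (reducedGraph G u v v₁ v₂)) : PathIn G :=
  ⟨P.1.1, P.2.1.1, liftWalk hv1 hv2 P.2.2.1, isPath_liftWalk hv1 hv2 hG P.2.2.2⟩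

lemma exists_mem_liftEdge [Fintype V] (hv : G.degree v = 2) (hv1 : G.Adj v v₁)
    (hv2 : G.Adj v v₂) (h12 : v₁ ≠ v₂) (hna : ¬ G.Adj v₁ v₂) (hu1 : v₁ ≠ u) (hu2 : v₂ ≠ u)
    {e : Sym2 V} (he : e ∈ G.edgeSet) (hue : u ∉ e) :
    ∃ e' ∈ (reducedGraph G u v v₁ v₂).edgeSet, e ∈ liftEdge v v₁ v₂ e' := by
  have hN := fun y => adj_iff_of_degree_eq_two (x := y) hv hv1 hv2 h12
  induction e with
  | h x y =>
    by_cases hve : v ∈ s(x, y)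
    · refine ⟨s(⟨v₁, hu1, hv1.ne'⟩, ⟨v₂, hu2, hv2.ne'⟩),
        (reducedGraph_adj h12).2 (Or.inr rfl), ?_⟩
      rw [liftEdge, if_pos (Sym2.map_mk _ _ _)]
      rcases Sym2.mem_iff.1 hve with rfl | rfl
      · rcases (hN y).1 he with rfl | rfl <;> simp
      · rcases (hN x).1 (G.adj_symm he) with rfl | rfl <;> simp [Sym2.eq_swap]
    · simp only [Sym2.mem_iff, not_or] at hve hue
      refine ⟨s(⟨x, Ne.symm hue.1, Ne.symm hve.1⟩, ⟨y, Ne.symm hue.2, Ne.symm hve.2⟩),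
        (reducedGraph_adj h12).2 (Or.inl he), ?_⟩
      rw [liftEdge, Sym2.map_mk, if_neg fun h => hna (by rw [h] at he; exact he)]
      rfl

variable (hG : G.IsAcyclic) (hv1 : G.Adj v v₁) (hv2 : G.Adj v v₂)

lemma emem_liftPath_iff {e : Sym2 V} {e' : Sym2 {x : V // x ≠ u ∧ x ≠ v}}
    (he : e ∈ liftEdge v v₁ v₂ e') (P : PathIn (reducedGraph G u v v₁ v₂)) :
    PathIn.emem e (liftPath hG hv1 hv2 P) ↔ PathIn.emem e' P := by
  refine (mem_edges_liftWalk hv1 hv2 _ e).trans ⟨?_, fun h => ⟨e', h, he⟩⟩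
  rintro ⟨f', hf', hef⟩
  exact eq_of_mem_liftEdge he hef ▸ hf'

lemma not_emem_liftPath (hu1 : v₁ ≠ u) (hu2 : v₂ ≠ u) (huv : u ≠ v) {e : Sym2 V} (hue : u ∈ e)
    (P : PathIn (reducedGraph G u v v₁ v₂)) : ¬ PathIn.emem e (liftPath hG hv1 hv2 P) := by
  intro h
  obtain ⟨f', -, hf⟩ := (mem_edges_liftWalk hv1 hv2 _ e).1 h
  exact notMem_of_mem_liftEdge hu1 hu2 huv hf hue

lemma edgeSep_insert_liftPath [Fintype V] (hu : G.degree u = 1) (huw : G.Adj u w)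
    (hv : G.degree v = 2) (h12 : v₁ ≠ v₂) (hu1 : v₁ ≠ u) (hu2 : v₂ ≠ u) (huv : u ≠ v)
    {F' : Set (PathIn (reducedGraph G u v v₁ v₂))} (hsep : EdgeSep _ F') (hcov : EdgeCover _ F')
    {Q : PathIn G} (hQ : ¬ (PathIn.emem s(v, v₁) Q ↔ PathIn.emem s(v, v₂) Q)) :
    EdgeSep G (insert Q (liftPath hG hv1 hv2 '' F')) := by
  have hna := hG.not_adj_of_adj_of_adj hv1 hv2
  have hsep_leaf : ∀ e ∈ G.edgeSet, ∀ f ∈ G.edgeSet, u ∈ e → u ∉ f →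
      ∃ P ∈ insert Q (liftPath hG hv1 hv2 '' F'), ¬ (PathIn.emem e P ↔ PathIn.emem f P) := by
    intro e he f hf hue huf
    obtain ⟨f', hf', hff'⟩ := exists_mem_liftEdge hv hv1 hv2 h12 hna hu1 hu2 hf huf
    obtain ⟨P, hP, hfP⟩ := hcov f' hf'
    refine ⟨_, Set.mem_insert_of_mem _ ⟨P, hP, rfl⟩, ?_⟩
    simp [not_emem_liftPath hG hv1 hv2 hu1 hu2 huv hue, emem_liftPath_iff hG hv1 hv2 hff', hfP]
  rw [edgeSep_iff] at hsep ⊢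
  intro e he f hf hef
  by_cases hue : u ∈ e
  · refine hsep_leaf e he f hf hue fun huf => hef ?_
    rw [eq_of_mem_edgeSet_of_degree_eq_one hu huw he hue,
      eq_of_mem_edgeSet_of_degree_eq_one hu huw hf huf]
  by_cases huf : u ∈ f
  · obtain ⟨P, hP, h⟩ := hsep_leaf f hf e he huf hue
    exact ⟨P, hP, fun h' => h h'.symm⟩
  obtain ⟨e', he', hee'⟩ := exists_mem_liftEdge hv hv1 hv2 h12 hna hu1 hu2 he hue
  obtain ⟨f', hf', hff'⟩ := exists_mem_liftEdge hv hv1 hv2 h12 hna hu1 hu2 hf huf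
  by_cases h : e' = f'
  · subst h
    refine ⟨Q, Set.mem_insert _ _, ?_⟩
    rcases eq_or_eq_of_mem_liftEdge hee' hff' hef with ⟨rfl, rfl⟩ | ⟨rfl, rfl⟩
    exacts [hQ, fun h => hQ h.symm]
  · obtain ⟨P, hP, hPs⟩ := hsep e' he' f' hf' h
    refine ⟨_, Set.mem_insert_of_mem _ ⟨P, hP, rfl⟩, ?_⟩
    rwa [emem_liftPath_iff hG hv1 hv2 hee', emem_liftPath_iff hG hv1 hv2 hff']

lemma edgeCover_insert_liftPath [Fintype V] (hu : G.degree u = 1) (huw : G.Adj u w)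
    (hv : G.degree v = 2) (h12 : v₁ ≠ v₂) (hu1 : v₁ ≠ u) (hu2 : v₂ ≠ u)
    {F' : Set (PathIn (reducedGraph G u v v₁ v₂))} (hcov : EdgeCover _ F')
    {Q : PathIn G} (hQ : PathIn.emem s(u, w) Q) :
    EdgeCover G (insert Q (liftPath hG hv1 hv2 '' F')) := by
  intro e he
  by_cases hue : u ∈ e
  · exact ⟨Q, Set.mem_insert _ _, eq_of_mem_edgeSet_of_degree_eq_one hu huw he hue ▸ hQ⟩
  obtain ⟨e', he', hee'⟩ := exists_mem_liftEdge hv hv1 hv2 h12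
    (hG.not_adj_of_adj_of_adj hv1 hv2) hu1 hu2 he hue
  obtain ⟨P, hP, hPe⟩ := hcov e' he'
  exact ⟨_, Set.mem_insert_of_mem _ ⟨P, hP, rfl⟩, (emem_liftPath_iff hG hv1 hv2 hee' P).2 hPe⟩

end Separation

lemma exists_pathIn_emem_and_separates_pair [Fintype V] {G : SimpleGraph V} {u w v v₁ v₂ : V}
    (hG : G.Connected) (hu : G.degree u = 1) (huw : G.Adj u w) (hv : G.degree v = 2)
    (hv1 : G.Adj v v₁) (hv2 : G.Adj v v₂) (h12 : v₁ ≠ v₂) (huv : u ≠ v) :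
    ∃ Q : PathIn G, PathIn.emem s(u, w) Q ∧
      ¬ (PathIn.emem s(v, v₁) Q ↔ PathIn.emem s(v, v₂) Q) := by
  obtain ⟨p⟩ := hG.preconnected u v
  have hnil : ¬ p.toPath.1.Nil := Walk.not_nil_of_ne huv
  refine ⟨⟨u, v, p.toPath.1, p.toPath.2⟩, ?_, ?_⟩
  · show s(u, w) ∈ p.toPath.1.edges
    rw [← (adj_iff_of_degree_eq_one hu huw).1 (Walk.adj_snd hnil)]
    exact Walk.mk_start_snd_mem_edges hnil
  · show ¬ (s(v, v₁) ∈ p.toPath.1.edges ↔ s(v, v₂) ∈ p.toPath.1.edges)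
    rw [p.toPath.2.mk_end_mem_edges_iff hnil, p.toPath.2.mk_end_mem_edges_iff hnil]
    have hpen := (adj_iff_of_degree_eq_two hv hv1 hv2 h12).1 (Walk.adj_penultimate hnil).symm
    grind

theorem stmt19 [Fintype V] (G : SimpleGraph V) (hT : G.IsTree)
    (u w v v₁ v₂ : V)
    (hu : G.degree u = 1) (huw : G.Adj u w) (hw : 4 ≤ G.degree w)
    (hv : G.degree v = 2) (hv1 : G.Adj v v₁) (hv2 : G.Adj v v₂) (h12 : v₁ ≠ v₂) :
    leafCount (reducedGraph G u v v₁ v₂) = leafCount G - 1 ∧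
    deg2Count (reducedGraph G u v v₁ v₂) = deg2Count G - 1 ∧
    ∀ F' : Set (PathIn (reducedGraph G u v v₁ v₂)), F'.Finite →
      EdgeSep (reducedGraph G u v v₁ v₂) F' →
      EdgeCover (reducedGraph G u v v₁ v₂) F' →
      ∃ F : Set (PathIn G), F.Finite ∧ EdgeSep G F ∧ EdgeCover G F ∧
        F.ncard ≤ F'.ncard + 1 := by
  have hna := hT.isAcyclic.not_adj_of_adj_of_adj hv1 hv2
  have huv : u ≠ v := fun h => by rw [h, hv] at hu; omega
  have hvu : ∀ x, G.Adj v x → x ≠ u := fun x hx hxu => by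
    rw [← (adj_iff_of_degree_eq_one hu huw).1 (hxu ▸ hx.symm), hv] at hw
    omega
  have hcard := fun k => card_degree_reducedGraph (k := k) hu huw hv hv1 hv2 h12 hna
    (hvu _ hv1) (hvu _ hv2) huv
  refine ⟨?_, ?_, fun F' hF' hsep hcov => ?_⟩
  · rw [leafCount, leafCount, hcard _ (by omega), Nat.card_coe_set_eq,
      Set.ncard_sdiff_pair_of_mem_of_notMem (s := {x | G.degree x = 1}) hu (by simp [hv])]
  · rw [deg2Count, deg2Count, hcard _ (by omega), Nat.card_coe_set_eq, Set.pair_comm,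
      Set.ncard_sdiff_pair_of_mem_of_notMem (s := {x | G.degree x = 2}) hv (by simp [hu])]
  obtain ⟨Q, hQuw, hQv⟩ :=
    exists_pathIn_emem_and_separates_pair hT.connected hu huw hv hv1 hv2 h12 huv
  exact ⟨_, (hF'.image _).insert Q,
    edgeSep_insert_liftPath hT.isAcyclic hv1 hv2 hu huw hv h12 (hvu _ hv1) (hvu _ hv2) huv
      hsep hcov hQv,
    edgeCover_insert_liftPath hT.isAcyclic hv1 hv2 hu huw hv h12 (hvu _ hv1) (hvu _ hv2) hcov hQuw,
    (Set.ncard_insert_le _ _).trans (Nat.add_le_add_right (Set.ncard_image_le hF') 1)⟩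
end
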